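/- arXiv:1211.6035 — 9 statements merged into one kernel-verified Lean document; each statement's English description precedes it below -/
import Mathlib

section
/- Let m, n be natural numbers and let L be a subset of [m] × [n]. If L is not of the form P × Q for some P ⊆ [m] and Q ⊆ [n], then the sum of (-1)^{|K|} over all subsets K of [m] × [n] with L ⊆ K such that both coordinate projections of K are surjective onto [m] and [n] equals 0. -/
/-!
If `L` is not a product, it has a missing corner: `(a, b), (c, d) ∈ L` but `(a, d) ∉ L`.
Adding or removing `(a, d)` from `K ⊇ L` never changes whether both projections of `K` are
surjective, since row `a` and column `d` stay covered by `(a, b)` and `(c, d)`. So the sets `K`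
in the sum pair up with sizes of opposite parity.
-/

open Finset

namespace Finset

theorem sum_filter_powerset_neg_one_pow_card_eq_zero {α : Type*} [DecidableEq α] {s : Finset α}
    {p : α} (hp : p ∈ s) (P : Finset α → Prop) [DecidablePred P]
    (hP : ∀ K ⊆ s.erase p, P (insert p K) ↔ P K) :
    ∑ K ∈ s.powerset.filter P, (-1 : ℤ) ^ K.card = 0 := by
  rw [sum_filter, ← insert_erase hp, sum_powerset_insert (notMem_erase p s), ← sum_add_distrib]
  refine sum_eq_zero fun K hK => ?_
  have hpK : p ∉ K := fun h => notMem_erase p s (mem_powerset.1 hK h)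
  rw [card_insert_of_notMem hpK, pow_succ]
  simp only [hP K (mem_powerset.1 hK)]
  split_ifs <;> ring

end Finset

section Corner

variable {α β : Type*}

theorem exists_corner_of_not_product [DecidableEq α] [DecidableEq β] {L : Finset (α × β)}
    (hL : ¬ ∃ (P : Finset α) (Q : Finset β), L = P ×ˢ Q) :
    ∃ a b c d, (a, b) ∈ L ∧ (c, d) ∈ L ∧ (a, d) ∉ L := by
  by_contra! h
  refine hL ⟨L.image Prod.fst, L.image Prod.snd, ?_⟩
  ext ⟨x, y⟩
  simp only [mem_product, mem_image]
  constructor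
  · intro hxy
    exact ⟨⟨(x, y), hxy, rfl⟩, ⟨(x, y), hxy, rfl⟩⟩
  · rintro ⟨⟨⟨x, y'⟩, hx, rfl⟩, ⟨⟨x', y⟩, hy, rfl⟩⟩
    exact h _ _ _ _ hx hy

def ProjectionsSurjective (K : Finset (α × β)) : Prop :=
  (∀ i, ∃ j, (i, j) ∈ K) ∧ (∀ j, ∃ i, (i, j) ∈ K)

theorem ProjectionsSurjective.mono {K K' : Finset (α × β)} (hK : ProjectionsSurjective K)
    (hKK' : K ⊆ K') : ProjectionsSurjective K' :=
  ⟨fun i => (hK.1 i).imp fun _ h => hKK' h, fun j => (hK.2 j).imp fun _ h => hKK' h⟩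

theorem projectionsSurjective_insert_corner_iff [DecidableEq α] [DecidableEq β]
    {K : Finset (α × β)} {a c : α} {b d : β} (hab : (a, b) ∈ K) (hcd : (c, d) ∈ K) :
    ProjectionsSurjective (insert (a, d) K) ↔ ProjectionsSurjective K := by
  refine ⟨fun ⟨hrow, hcol⟩ => ⟨fun i => ?_, fun j => ?_⟩, fun hK => hK.mono (subset_insert _ _)⟩
  · by_cases hi : i = a
    · exact ⟨b, hi ▸ hab⟩
    · obtain ⟨j, hj⟩ := hrow i
      exact ⟨j, (mem_insert.1 hj).resolve_left fun h => hi (Prod.ext_iff.1 h).1⟩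
  · by_cases hj : j = d
    · exact ⟨c, hj ▸ hcd⟩
    · obtain ⟨i, hi⟩ := hcol j
      exact ⟨i, (mem_insert.1 hi).resolve_left fun h => hj (Prod.ext_iff.1 h).2⟩

end Corner

/-- If `L ⊆ [m] × [n]` is not a product `P × Q`, then the sum of `(-1)^|K|`
over all `K` with `L ⊆ K ⊆ [m] × [n]` having both coordinate projections surjective
vanishes. -/
theorem maze_sum_vanishes_of_not_product (m n : ℕ) (L : Finset (Fin m × Fin n))
    (hL : ¬ ∃ (P : Finset (Fin m)) (Q : Finset (Fin n)), L = P ×ˢ Q) :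
    ∑ K ∈ (univ : Finset (Fin m × Fin n)).powerset.filter
        (fun K => L ⊆ K ∧ (∀ i : Fin m, ∃ j : Fin n, (i, j) ∈ K) ∧
          (∀ j : Fin n, ∃ i : Fin m, (i, j) ∈ K)),
      (-1 : ℤ) ^ K.card = 0 := by
  obtain ⟨a, b, c, d, hab, hcd, had⟩ := exists_corner_of_not_product hL
  refine sum_filter_powerset_neg_one_pow_card_eq_zero (mem_univ (a, d)) _ fun K _ => ?_
  exact (and_congr_left' (subset_insert_iff_of_notMem had)).trans
    (and_congr_right fun hLK => projectionsSurjective_insert_corner_iff (hLK hab) (hLK hcd))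
end

section
/- Let m, n, p, q be natural numbers with p ≤ m and q ≤ n, and with p, q ≥ 1 (or p = m = 0 and q = n = 0 handled trivially). Then the sum of (-1)^{|K|} over all subsets K of [m] × [n] containing [p] × [q], whose projections onto [m] and onto [n] are both surjective, equals (-1)^{m+n+p+q+pq}. -/
/-! Call `K ⊆ A × B` an edge cover if both projections of `K` are onto. Adding to `A` a row `a`
outside the rows of a nonempty `R ⊆ A × B` negates the alternating sum over the edge covers
containing `R`: for a cell `(a₀, b₀) ∈ R`, toggling `(a, b₀)` never uncovers column `b₀`, so it is
a sign-reversing involution on all covers except those whose row `a` is exactly `{(a, b₀)}`, and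
erasing `(a, b₀)` matches these with the covers inside `A × B`, of opposite sign. By symmetry the
same holds for columns, so peeling off the rows outside `[p]` and the columns outside `[q]` leaves
`[p] × [q]`, whose only cover is itself. -/

open Finset

theorem Finset.sum_neg_one_pow_card_of_insert_mem {γ S : Type*} [DecidableEq γ] [Ring S]
    {F : Finset (Finset γ)} {x : γ} (hF : ∀ K ∈ F, insert x K ∈ F) :
    ∑ K ∈ F, (-1 : S) ^ #K = ∑ K ∈ F with x ∈ K ∧ K.erase x ∉ F, (-1 : S) ^ #K := by
  rw [← sum_filter_add_sum_filter_not F (fun K => x ∈ K ∧ K.erase x ∉ F), add_eq_left]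
  refine sum_involution (fun K _ => if x ∈ K then K.erase x else insert x K) ?_ ?_ ?_ ?_
  · intro K _
    split_ifs with hx
    · rw [← card_erase_add_one hx, pow_succ, mul_neg_one, neg_add_cancel]
    · rw [card_insert_of_notMem hx, pow_succ, mul_neg_one, add_neg_cancel]
  · intro K _ _
    split_ifs with hx
    · exact (erase_ssubset hx).ne
    · exact (ssubset_insert hx).ne'
  · intro K hK
    obtain ⟨hKF, hK⟩ := mem_filter.1 hK
    split_ifs with hx
    · exact mem_filter.2 ⟨not_and_not_right.1 hK hx, fun h => notMem_erase x K h.1⟩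
    · exact mem_filter.2 ⟨hF K hKF, by simpa [erase_insert hx] using hKF⟩
  · intro K _
    split_ifs with hx hx' hx'
    · exact absurd hx' (notMem_erase x K)
    · exact insert_erase hx
    · exact erase_insert hx
    · exact absurd (mem_insert_self x K) hx'

variable {α β : Type*}

open scoped Classical in
noncomputable def edgeCovers (A : Finset α) (B : Finset β) (R : Finset (α × β)) :
    Finset (Finset (α × β)) :=
  (A ×ˢ B).powerset.filter fun K =>
    R ⊆ K ∧ (∀ a ∈ A, ∃ b, (a, b) ∈ K) ∧ ∀ b ∈ B, ∃ a, (a, b) ∈ K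

noncomputable def edgeCoverSum (A : Finset α) (B : Finset β) (R : Finset (α × β)) : ℤ :=
  ∑ K ∈ edgeCovers A B R, (-1) ^ #K

theorem Finset.map_prodComm_map_prodComm (K : Finset (α × β)) :
    (K.map (Equiv.prodComm α β).toEmbedding).map (Equiv.prodComm β α).toEmbedding = K := by
  ext; simp [mem_map_equiv]

section
variable {A : Finset α} {B : Finset β} {R K : Finset (α × β)}

theorem mem_edgeCovers : K ∈ edgeCovers A B R ↔
    K ⊆ A ×ˢ B ∧ R ⊆ K ∧ (∀ a ∈ A, ∃ b, (a, b) ∈ K) ∧ ∀ b ∈ B, ∃ a, (a, b) ∈ K := by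
  simp [edgeCovers]

theorem edgeCovers_product_self (hA : A.Nonempty) (hB : B.Nonempty) :
    edgeCovers A B (A ×ˢ B) = {A ×ˢ B} := by
  ext K
  simp only [mem_edgeCovers, mem_singleton]
  constructor
  · rintro ⟨hKAB, hABK, -⟩
    exact hKAB.antisymm hABK
  · rintro rfl
    obtain ⟨a₀, ha₀⟩ := hA
    obtain ⟨b₀, hb₀⟩ := hB
    exact ⟨subset_rfl, subset_rfl, fun a ha => ⟨b₀, mk_mem_product ha hb₀⟩,
      fun b hb => ⟨a₀, mk_mem_product ha₀ hb⟩⟩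

theorem edgeCoverSum_product_self (hA : A.Nonempty) (hB : B.Nonempty) :
    edgeCoverSum A B (A ×ˢ B) = (-1) ^ (#A * #B) := by
  rw [edgeCoverSum, edgeCovers_product_self hA hB, sum_singleton, card_product]

theorem map_prodComm_mem_edgeCovers (hK : K ∈ edgeCovers A B R) :
    K.map (Equiv.prodComm α β).toEmbedding ∈
      edgeCovers B A (R.map (Equiv.prodComm α β).toEmbedding) := by
  obtain ⟨hKAB, hRK, hrow, hcol⟩ := mem_edgeCovers.1 hK
  refine mem_edgeCovers.2 ⟨?_, map_subset_map.2 hRK, ?_, ?_⟩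
  · rw [← map_swap_product]
    exact map_subset_map.2 hKAB
  · simpa [mem_map_equiv] using hcol
  · simpa [mem_map_equiv] using hrow

theorem edgeCoverSum_comm :
    edgeCoverSum A B R = edgeCoverSum B A (R.map (Equiv.prodComm α β).toEmbedding) := by
  refine sum_nbij' (·.map (Equiv.prodComm α β).toEmbedding)
    (·.map (Equiv.prodComm β α).toEmbedding) (fun K hK => map_prodComm_mem_edgeCovers hK)
    (fun K hK => ?_) (fun K _ => map_prodComm_map_prodComm K)
    (fun K _ => map_prodComm_map_prodComm K) (fun K _ => by rw [card_map])
  simpa only [map_prodComm_map_prodComm] using map_prodComm_mem_edgeCovers hK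

end

section
variable [DecidableEq α] {A : Finset α} {B : Finset β} {R K : Finset (α × β)} {a a₀ : α} {b : β}

theorem notMem_edgeCovers_insert (ha : a ∉ A) (hK : K ∈ edgeCovers A B R) :
    K ∉ edgeCovers (insert a A) B R := fun h => by
  obtain ⟨d, hd⟩ := (mem_edgeCovers.1 h).2.2.1 a (mem_insert_self a A)
  exact ha (mem_product.1 ((mem_edgeCovers.1 hK).1 hd)).1

variable [DecidableEq β]

theorem insert_mem_edgeCovers_insert (hK : K ∈ edgeCovers A B R) (hb : b ∈ B) :
    insert (a, b) K ∈ edgeCovers (insert a A) B R := by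
  obtain ⟨hKAB, hRK, hrow, hcol⟩ := mem_edgeCovers.1 hK
  refine mem_edgeCovers.2 ⟨insert_subset (mk_mem_product (mem_insert_self a A) hb)
    (hKAB.trans (product_subset_product_left (subset_insert a A))), hRK.trans (subset_insert _ _),
    (forall_mem_insert _ _ _).2 ⟨⟨b, mem_insert_self _ _⟩, fun c hc => ?_⟩, fun d hd => ?_⟩
  · exact (hrow c hc).imp fun _ => mem_insert_of_mem
  · exact (hcol d hd).imp fun _ => mem_insert_of_mem

theorem erase_mem_edgeCovers (ha : a ∉ A) (hRAB : R ⊆ A ×ˢ B) (h₀ : (a₀, b) ∈ R)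
    (hK : K ∈ edgeCovers (insert a A) B R) (hKa : K.erase (a, b) ∉ edgeCovers (insert a A) B R) :
    K.erase (a, b) ∈ edgeCovers A B R := by
  obtain ⟨hKAB, hRK, hrow, hcol⟩ := mem_edgeCovers.1 hK
  have hRL : R ⊆ K.erase (a, b) := fun c hc =>
    mem_erase.2 ⟨fun h => ha (mem_product.1 (hRAB (h ▸ hc))).1, hRK hc⟩
  have hrowL : ∀ c ∈ A, ∃ d, (c, d) ∈ K.erase (a, b) := by
    intro c hc
    obtain ⟨d, hd⟩ := hrow c (mem_insert_of_mem hc)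
    exact ⟨d, mem_erase.2 ⟨fun h => ha ((Prod.mk.inj h).1 ▸ hc), hd⟩⟩
  have hcolL : ∀ d ∈ B, ∃ c, (c, d) ∈ K.erase (a, b) := by
    intro d hd
    obtain ⟨c, hc⟩ := hcol d hd
    by_cases h : (c, d) = (a, b)
    · obtain ⟨rfl, rfl⟩ := Prod.mk.inj h
      exact ⟨a₀, hRL h₀⟩
    · exact ⟨c, mem_erase.2 ⟨h, hc⟩⟩
  have hLa : ∀ d, (a, d) ∉ K.erase (a, b) := fun d hd =>
    hKa (mem_edgeCovers.2 ⟨(erase_subset _ _).trans hKAB, hRL,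
      (forall_mem_insert _ _ _).2 ⟨⟨d, hd⟩, hrowL⟩, hcolL⟩)
  refine mem_edgeCovers.2 ⟨fun ⟨c, d⟩ hcd => ?_, hRL, hrowL, hcolL⟩
  obtain ⟨hc, hd⟩ := mem_product.1 (hKAB (mem_of_mem_erase hcd))
  refine mk_mem_product ((mem_insert.1 hc).resolve_left ?_) hd
  rintro rfl
  exact hLa d hcd

theorem edgeCoverSum_insert_left (ha : a ∉ A) (hRAB : R ⊆ A ×ˢ B) (hR : R.Nonempty) :
    edgeCoverSum (insert a A) B R = -edgeCoverSum A B R := by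
  obtain ⟨⟨a₀, b₀⟩, h₀⟩ := hR
  have hb₀ : b₀ ∈ B := (mem_product.1 (hRAB h₀)).2
  have hins : ∀ K ∈ edgeCovers (insert a A) B R, insert (a, b₀) K ∈ edgeCovers (insert a A) B R :=
    fun K hK => by
      have := insert_mem_edgeCovers_insert (a := a) hK hb₀
      rwa [insert_idem] at this
  rw [edgeCoverSum, sum_neg_one_pow_card_of_insert_mem hins, edgeCoverSum, ← sum_neg_distrib]
  have hxL : ∀ L ∈ edgeCovers A B R, (a, b₀) ∉ L := fun L hL h =>
    ha (mem_product.1 ((mem_edgeCovers.1 hL).1 h)).1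
  refine sum_nbij' (·.erase (a, b₀)) (insert (a, b₀)) ?_ ?_ ?_ ?_ ?_
  · intro K hK
    obtain ⟨hK, -, hKa⟩ := mem_filter.1 hK
    exact erase_mem_edgeCovers ha hRAB h₀ hK hKa
  · intro L hL
    refine mem_filter.2 ⟨insert_mem_edgeCovers_insert hL hb₀, mem_insert_self _ _, ?_⟩
    rw [erase_insert (hxL L hL)]
    exact notMem_edgeCovers_insert ha hL
  · intro K hK
    exact insert_erase (mem_filter.1 hK).2.1
  · intro L hL
    exact erase_insert (hxL L hL)
  · intro K hK
    rw [← card_erase_add_one (mem_filter.1 hK).2.1, pow_succ, mul_neg_one]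

theorem edgeCoverSum_insert_right (hb : b ∉ B) (hRAB : R ⊆ A ×ˢ B) (hR : R.Nonempty) :
    edgeCoverSum A (insert b B) R = -edgeCoverSum A B R := by
  have hRBA : R.map (Equiv.prodComm α β).toEmbedding ⊆ B ×ˢ A := by
    rw [← map_swap_product]
    exact map_subset_map.2 hRAB
  rw [edgeCoverSum_comm, edgeCoverSum_insert_left hb hRBA (hR.map), ← edgeCoverSum_comm]

theorem edgeCoverSum_union_left {D : Finset α} (hAD : Disjoint A D) (hRAB : R ⊆ A ×ˢ B)
    (hR : R.Nonempty) : edgeCoverSum (A ∪ D) B R = (-1) ^ #D * edgeCoverSum A B R := by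
  induction D using Finset.induction_on with
  | empty => simp
  | insert a D haD ih =>
    obtain ⟨haA, hAD⟩ := disjoint_insert_right.1 hAD
    have hRADB : R ⊆ (A ∪ D) ×ˢ B := hRAB.trans (product_subset_product_left subset_union_left)
    rw [union_insert, edgeCoverSum_insert_left (by simp [haA, haD]) hRADB hR, ih hAD,
      card_insert_of_notMem haD, pow_succ]
    ring

theorem edgeCoverSum_union_right {E : Finset β} (hBE : Disjoint B E) (hRAB : R ⊆ A ×ˢ B)
    (hR : R.Nonempty) : edgeCoverSum A (B ∪ E) R = (-1) ^ #E * edgeCoverSum A B R := by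
  induction E using Finset.induction_on with
  | empty => simp
  | insert b E hbE ih =>
    obtain ⟨hbB, hBE⟩ := disjoint_insert_right.1 hBE
    have hRABE : R ⊆ A ×ˢ (B ∪ E) := hRAB.trans (product_subset_product_right subset_union_left)
    rw [union_insert, edgeCoverSum_insert_right (by simp [hbB, hbE]) hRABE hR, ih hBE,
      card_insert_of_notMem hbE, pow_succ]
    ring

theorem edgeCoverSum_product {P : Finset α} {Q : Finset β} (hPA : P ⊆ A) (hQB : Q ⊆ B)
    (hP : P.Nonempty) (hQ : Q.Nonempty) :
    edgeCoverSum A B (P ×ˢ Q) = (-1) ^ (#(A \ P) + #(B \ Q) + #P * #Q) := by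
  have hR := hP.product hQ
  calc edgeCoverSum A B (P ×ˢ Q)
      = (-1) ^ #(A \ P) * edgeCoverSum P B (P ×ˢ Q) := by
        rw [← edgeCoverSum_union_left disjoint_sdiff (product_subset_product_right hQB) hR,
          union_sdiff_of_subset hPA]
    _ = (-1) ^ #(A \ P) * ((-1) ^ #(B \ Q) * edgeCoverSum P Q (P ×ˢ Q)) := by
        rw [← edgeCoverSum_union_right disjoint_sdiff subset_rfl hR, union_sdiff_of_subset hQB]
    _ = _ := by rw [edgeCoverSum_product_self hP hQ, pow_add, pow_add, mul_assoc]

end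

/-- For `1 ≤ p ≤ m` and `1 ≤ q ≤ n`, the sum of `(-1)^|K|` over all
`K` with `[p] × [q] ⊆ K ⊆ [m] × [n]` having both coordinate projections surjective
equals `(-1)^(m+n+p+q+pq)`. -/
theorem maze_sum_eq_of_rectangle (m n p q : ℕ)
    (hp : 1 ≤ p) (hq : 1 ≤ q) (hpm : p ≤ m) (hqn : q ≤ n) :
    ∑ K ∈ (univ : Finset (Fin m × Fin n)).powerset.filter
        (fun K => ((univ.filter fun i : Fin m => (i : ℕ) < p) ×ˢ
            (univ.filter fun j : Fin n => (j : ℕ) < q)) ⊆ K ∧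
          (∀ i : Fin m, ∃ j : Fin n, (i, j) ∈ K) ∧
          (∀ j : Fin n, ∃ i : Fin m, (i, j) ∈ K)),
      (-1 : ℤ) ^ K.card = (-1 : ℤ) ^ (m + n + p + q + p * q) := by
  set P := univ.filter fun i : Fin m => (i : ℕ) < p
  set Q := univ.filter fun j : Fin n => (j : ℕ) < q
  have hPcard : #P = p := by rw [Fin.card_filter_val_lt, min_eq_right hpm]
  have hQcard : #Q = q := by rw [Fin.card_filter_val_lt, min_eq_right hqn]
  have hP : P.Nonempty := card_pos.1 (by omega)
  have hQ : Q.Nonempty := card_pos.1 (by omega)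
  calc _ = edgeCoverSum univ univ (P ×ˢ Q) :=
        sum_congr (by ext K; simp [mem_edgeCovers]) fun _ _ => rfl
    _ = (-1) ^ (m - p + (n - q) + p * q) := by
        rw [edgeCoverSum_product (subset_univ P) (subset_univ Q) hP hQ, card_univ_sdiff,
          card_univ_sdiff, hPcard, hQcard, Fintype.card_fin, Fintype.card_fin]
    _ = (-1) ^ (m - p + (n - q) + p * q + 2 * (p + q)) := by
        rw [pow_add _ _ (2 * _), pow_mul, neg_one_sq, one_pow, mul_one]
    _ = _ := by congr 1; omega
end

section
/- Deviation Formula: Let F be a functor from finitely generated free B-modules to B-modules (not necessarily additive), and define the n-th deviation of F on parallel homomorphisms α₁,...,α_{m} : M → N by F(α₁ | ⋯ | α_m) = Σ_{I ⊆ [m]} (-1)^{m - |I|} F(Σ_{i∈I} α_i). Then for composable homomorphisms α₁,...,α_m : N → P and β₁,...,β_n : M → N, one has F(α₁|⋯|α_m) ∘ F(β₁|⋯|β_n) = Σ_{K ⊑ [m]×[n]} F( |_{(i,j)∈K} α_i β_j ), where the sum is over all subsets K of [m]×[n] with both projections surjective, and the right-hand deviation is taken over the family of composites α_iβ_j indexed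 by K. -/
open Finset CategoryTheory

/-- The deviation of a functor `F` along a finite family of parallel morphisms:
`F(f₁ | ⋯ | f_k) = Σ_{I ⊆ [k]} (-1)^(k - |I|) F(Σ_{i∈I} f i)`. -/
noncomputable def functorDeviation {R : Type} [Ring R]
    (F : ModuleCat R ⥤ ModuleCat R) {M N : ModuleCat R}
    {ι : Type} [Fintype ι] [DecidableEq ι] (f : ι → (M ⟶ N)) :
    F.obj M ⟶ F.obj N :=
  ∑ I ∈ (univ : Finset ι).powerset,
    (-1 : ℤ) ^ (Fintype.card ι - I.card) • F.map (∑ i ∈ I, f i)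

/-!
Expanding both deviations, the left side is `Σ_{I,J} ± F(Σ_{(i,j) ∈ I × J} α_i β_j)`. By Möbius
inversion on the Boolean lattice, each value `F(Σ_{p ∈ T} g_p)` is the sum of the deviations
`F(g_p | p ∈ K)` over `K ⊆ T`. Exchanging the sums, the deviation on `K` gets the coefficient
`(Σ_{I ⊇ pr₁ K} (-1)^(m-|I|)) · (Σ_{J ⊇ pr₂ K} (-1)^(n-|J|))`, which is `1` when both projections
of `K` are surjective and `0` otherwise.
-/

section Deviation

variable {ω : Type*} {A : Type*} [AddCommGroup A]

theorem sum_Icc_neg_one_pow_card_sub [DecidableEq ω] {s t : Finset ω} (h : s ⊆ t) :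
    ∑ u ∈ Icc s t, (-1 : ℤ) ^ (#u - #s) = if s = t then 1 else 0 := by
  have hinj : Set.InjOn (s ∪ ·) ((t \ s).powerset : Set (Finset ω)) := fun u hu v hv huv => by
    simp only [coe_powerset, Set.mem_preimage, Set.mem_powerset_iff, coe_subset] at hu hv
    rw [← union_sdiff_cancel_left (disjoint_sdiff.mono_right hu),
      ← union_sdiff_cancel_left (disjoint_sdiff.mono_right hv)]
    exact congrArg (· \ s) huv
  have hsign : ∀ u ∈ (t \ s).powerset, (-1 : ℤ) ^ (#(s ∪ u) - #s) = (-1) ^ #u := fun u hu => by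
    rw [card_union_of_disjoint (disjoint_sdiff.mono_right (mem_powerset.1 hu)),
      Nat.add_sub_cancel_left]
  rw [Icc_eq_image_powerset h, sum_image hinj, sum_congr rfl hsign,
    sum_powerset_neg_one_pow_card]
  refine if_congr ?_ rfl rfl
  rw [sdiff_eq_empty_iff_subset]
  exact ⟨subset_antisymm h, fun hst => hst.ge⟩

theorem sum_Icc_neg_one_pow_sub_card [DecidableEq ω] {s t : Finset ω} (h : s ⊆ t) :
    ∑ u ∈ Icc s t, (-1 : ℤ) ^ (#t - #u) = if s = t then 1 else 0 := by
  have hsign : ∀ u ∈ Icc s t, (-1 : ℤ) ^ (#t - #u) = (-1) ^ (#t - #s) * (-1) ^ (#u - #s) :=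
    fun u hu => by
      obtain ⟨hsu, hut⟩ := mem_Icc.1 hu
      have hcard : #t - #s = (#t - #u) + (#u - #s) := by
        have := card_le_card hsu
        have := card_le_card hut
        omega
      rw [hcard, pow_add, mul_assoc, ← mul_pow]
      simp
  rw [sum_congr rfl hsign, ← mul_sum, sum_Icc_neg_one_pow_card_sub h]
  split_ifs with hst
  · simp [hst]
  · simp

def deviation (φ : Finset ω → A) (K : Finset ω) : A :=
  ∑ S ∈ K.powerset, (-1 : ℤ) ^ (#K - #S) • φ S

theorem sum_powerset_deviation [DecidableEq ω] (φ : Finset ω → A) (t : Finset ω) :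
    ∑ K ∈ t.powerset, deviation φ K = φ t := by
  calc ∑ K ∈ t.powerset, deviation φ K
      = ∑ S ∈ t.powerset, (∑ K ∈ Icc S t, (-1 : ℤ) ^ (#K - #S)) • φ S := by
        simp only [deviation, sum_smul]
        exact sum_comm' fun K S => by
          simp only [mem_powerset, mem_Icc]
          exact ⟨fun ⟨hKt, hSK⟩ => ⟨⟨hSK, hKt⟩, hSK.trans hKt⟩, fun ⟨⟨hSK, hKt⟩, _⟩ => ⟨hKt, hSK⟩⟩
    _ = ∑ S ∈ t.powerset, if S = t then φ S else 0 :=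
        sum_congr rfl fun S hS => by
          rw [sum_Icc_neg_one_pow_card_sub (mem_powerset.1 hS), ite_smul, one_smul, zero_smul]
    _ = φ t := by simp

variable {ι κ : Type*} [Fintype ι] [Fintype κ] [DecidableEq ι] [DecidableEq κ]

theorem sum_powerset_univ_ite_subset (s : Finset ι) :
    ∑ I ∈ (univ : Finset ι).powerset,
        (if s ⊆ I then (-1 : ℤ) ^ (Fintype.card ι - #I) else 0) = if s = univ then 1 else 0 := by
  rw [← sum_filter, ← Icc_eq_filter_powerset, ← card_univ,
    sum_Icc_neg_one_pow_sub_card (subset_univ s)]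

-- An arbitrary instance, so that the lemmas apply to sums filtered with any decision procedure.
variable [DecidablePred fun K : Finset (ι × κ) => (∀ i, ∃ j, (i, j) ∈ K) ∧ ∀ j, ∃ i, (i, j) ∈ K]

theorem sum_powerset_ite_subset_product (K : Finset (ι × κ)) :
    ∑ I ∈ (univ : Finset ι).powerset, ∑ J ∈ (univ : Finset κ).powerset,
        (if K ⊆ I ×ˢ J then (-1 : ℤ) ^ (Fintype.card ι - #I) * (-1) ^ (Fintype.card κ - #J)
          else 0)
      = if (∀ i, ∃ j, (i, j) ∈ K) ∧ ∀ j, ∃ i, (i, j) ∈ K then 1 else 0 := by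
  have hsub : ∀ (I : Finset ι) (J : Finset κ),
      K ⊆ I ×ˢ J ↔ K.image Prod.fst ⊆ I ∧ K.image Prod.snd ⊆ J := fun I J =>
    ⟨fun h => ⟨image_subset_iff.2 fun p hp => (mem_product.1 (h hp)).1,
        image_subset_iff.2 fun p hp => (mem_product.1 (h hp)).2⟩,
      fun ⟨hI, hJ⟩ => subset_product.trans (product_subset_product hI hJ)⟩
  simp_rw [hsub, ← ite_zero_mul_ite_zero, ← sum_mul_sum, sum_powerset_univ_ite_subset,
    ite_zero_mul_ite_zero, mul_one, eq_univ_iff_forall, mem_image, Prod.exists]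
  simp

theorem sum_powerset_smul_product_eq_sum_deviation (φ : Finset (ι × κ) → A) :
    ∑ I ∈ (univ : Finset ι).powerset, ∑ J ∈ (univ : Finset κ).powerset,
        ((-1 : ℤ) ^ (Fintype.card ι - #I) * (-1) ^ (Fintype.card κ - #J)) • φ (I ×ˢ J)
      = ∑ K ∈ (univ : Finset (ι × κ)).powerset with
          (∀ i, ∃ j, (i, j) ∈ K) ∧ ∀ j, ∃ i, (i, j) ∈ K, deviation φ K := by
  calc _ = ∑ I ∈ (univ : Finset ι).powerset, ∑ J ∈ (univ : Finset κ).powerset,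
          ∑ K ∈ (univ : Finset (ι × κ)).powerset,
            (if K ⊆ I ×ˢ J then (-1 : ℤ) ^ (Fintype.card ι - #I) * (-1) ^ (Fintype.card κ - #J)
              else 0) • deviation φ K := by
        refine sum_congr rfl fun I _ => sum_congr rfl fun J _ => ?_
        simp_rw [← sum_powerset_deviation φ (I ×ˢ J), smul_sum, ite_smul, zero_smul,
          ← sum_filter]
        congr 1
        ext K
        simp
    _ = ∑ K ∈ (univ : Finset (ι × κ)).powerset,
          (∑ I ∈ (univ : Finset ι).powerset, ∑ J ∈ (univ : Finset κ).powerset,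
            if K ⊆ I ×ˢ J then (-1 : ℤ) ^ (Fintype.card ι - #I) * (-1) ^ (Fintype.card κ - #J)
              else 0) • deviation φ K := by
        simp_rw [sum_smul]
        exact (sum_congr rfl fun I _ => sum_comm).trans sum_comm
    _ = _ := by
        simp_rw [sum_powerset_ite_subset_product, ite_smul, one_smul, zero_smul, sum_filter]

end Deviation

section Functor

variable {R : Type} [Ring R] (F : ModuleCat R ⥤ ModuleCat R)

theorem functorDeviation_subtype {M N : ModuleCat R} {ω : Type} [DecidableEq ω]
    (f : ω → (M ⟶ N)) (K : Finset ω) :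
    functorDeviation F (fun k : K => f k) = deviation (fun S => F.map (∑ p ∈ S, f p)) K := by
  unfold functorDeviation deviation
  rw [Fintype.card_coe]
  refine sum_nbij' (·.map (Function.Embedding.subtype (· ∈ K))) (·.subtype (· ∈ K))
    (fun I _ => mem_powerset.2 fun _ => property_of_mem_map_subtype I)
    (fun _ _ => mem_powerset.2 (subset_univ _))
    (fun I _ => by ext; simp)
    (fun S hS => subtype_map_of_mem fun _ hx => mem_powerset.1 hS hx)
    (fun I _ => by simp [sum_map])

theorem functorDeviation_comp {M N P : ModuleCat R} {ι κ : Type} [Fintype ι] [Fintype κ]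
    [DecidableEq ι] [DecidableEq κ] (α : ι → (N ⟶ P)) (β : κ → (M ⟶ N)) :
    functorDeviation F β ≫ functorDeviation F α =
      ∑ I ∈ (univ : Finset ι).powerset, ∑ J ∈ (univ : Finset κ).powerset,
        ((-1 : ℤ) ^ (Fintype.card ι - #I) * (-1) ^ (Fintype.card κ - #J)) •
          F.map (∑ p ∈ I ×ˢ J, β p.2 ≫ α p.1) := by
  unfold functorDeviation
  rw [Preadditive.sum_comp, sum_comm]
  refine sum_congr rfl fun I _ => ?_
  rw [Preadditive.comp_sum]
  refine sum_congr rfl fun J _ => ?_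
  rw [Preadditive.zsmul_comp, Preadditive.comp_zsmul, smul_smul, ← Functor.map_comp, mul_comm,
    sum_product, Preadditive.sum_comp]
  simp only [Preadditive.comp_sum]
  rw [sum_comm]

end Functor

theorem deviation_formula_general {R : Type} [Ring R] (F : ModuleCat R ⥤ ModuleCat R)
    {M N P : ModuleCat R}
    (m n : ℕ) (α : Fin m → (N ⟶ P)) (β : Fin n → (M ⟶ N)) :
    functorDeviation F β ≫ functorDeviation F α =
      ∑ K ∈ (univ : Finset (Fin m × Fin n)).powerset.filter
          (fun K => (∀ i : Fin m, ∃ j : Fin n, (i, j) ∈ K) ∧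
            (∀ j : Fin n, ∃ i : Fin m, (i, j) ∈ K)),
        functorDeviation F (fun k : K => β k.1.2 ≫ α k.1.1) := by
  simp only [functorDeviation_subtype F (fun p : Fin m × Fin n => β p.2 ≫ α p.1)]
  rw [← sum_powerset_smul_product_eq_sum_deviation, functorDeviation_comp]

/-- Deviation Formula: for any functor `F` on finitely generated free
modules and composable families `α i : N ⟶ P`, `β j : M ⟶ N`,
`F(α₁|⋯|α_m) ∘ F(β₁|⋯|β_n) = Σ_{K ⊑ [m]×[n]} F( |_{(i,j)∈K} α_i β_j )`,
the sum running over subsets `K` of `[m]×[n]` with both projections surjective. -/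
theorem deviation_formula {R : Type} [Ring R] (F : ModuleCat R ⥤ ModuleCat R)
    {M N P : ModuleCat R}
    [Module.Free R M] [Module.Finite R M] [Module.Free R N] [Module.Finite R N]
    [Module.Free R P] [Module.Finite R P]
    (m n : ℕ) (α : Fin m → (N ⟶ P)) (β : Fin n → (M ⟶ N)) :
    functorDeviation F β ≫ functorDeviation F α =
      ∑ K ∈ (univ : Finset (Fin m × Fin n)).powerset.filter
          (fun K => (∀ i : Fin m, ∃ j : Fin n, (i, j) ∈ K) ∧
            (∀ j : Fin n, ∃ i : Fin m, (i, j) ∈ K)),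
        functorDeviation F (fun k : K => β k.1.2 ≫ α k.1.1) :=
  deviation_formula_general F m n α β
end

section
/- Let B be a binomial ring (a torsion-free commutative ring closed under the operations r ↦ binom(r,k)). For any element x of a divided power algebra over B, any a ∈ B, and any m ≥ 1: a^m x^{[m]} = Σ_{k=1}^{m} binom(a,k) Σ_{g₁+⋯+g_k = m, g_i ≥ 1} x^{[g₁]} ⋯ x^{[g_k]}. -/
/-!
For `x ∈ I` a product `x^{[g₁]} ⋯ x^{[g_k]}` with `g₁ + ⋯ + g_k = m` equals the multinomial
coefficient `(m; g₁, …, g_k)` times `x^{[m]}`, so the inner sum is `k! S(m, k) x^{[m]}` and the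
claim reduces to the identity `a^m = ∑ₖ k! S(m, k) binom(a, k)` in `B`. For `a = n ∈ ℕ` this is
the coefficient of `t^m / m!` in `e^{nt} = (1 + (e^t - 1))^n = ∑ₖ binom(n, k) (e^t - 1)^k`.
Multiplied by `m!`, both sides become values at `a` of one integer polynomial; it vanishes on `ℕ`,
hence identically, and torsion-freeness of `B` cancels the `m!`.
-/

open Finset

/-- `k! S(m, k)`, the number of surjections from an `m`-set onto a `k`-set. -/
def Nat.numSurjections (m k : ℕ) : ℕ :=
  ∑ g ∈ (Finset.Nat.antidiagonalTuple k m).filter (fun g => ∀ i, g i ≠ 0), Nat.multinomial univ g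

namespace Nat

theorem numSurjections_eq_zero_of_lt {m k : ℕ} (h : m < k) : numSurjections m k = 0 := by
  refine sum_eq_zero fun g hg => absurd h (not_lt.2 ?_)
  rw [mem_filter, Finset.Nat.mem_antidiagonalTuple] at hg
  calc k = ∑ _i : Fin k, 1 := by simp
    _ ≤ ∑ i, g i := sum_le_sum fun i _ => one_le_iff_ne_zero.2 (hg.2 i)
    _ = m := hg.1

theorem numSurjections_zero_right {m : ℕ} (hm : m ≠ 0) : numSurjections m 0 = 0 := by
  obtain ⟨m, rfl⟩ := exists_eq_succ_of_ne_zero hm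
  simp [numSurjections, Finset.Nat.antidiagonalTuple_zero_succ]

end Nat

namespace PowerSeries

variable {R : Type*} [CommSemiring R]

theorem coeff_pow_eq_sum_antidiagonalTuple (φ : R⟦X⟧) (k m : ℕ) :
    coeff m (φ ^ k) = ∑ g ∈ Nat.antidiagonalTuple k m, ∏ i, coeff (g i) φ := by
  classical
  rw [← Fin.prod_const, coeff_prod, finsuppAntidiag, sum_map,
    ← piAntidiag_univ_fin_eq_antidiagonalTuple]
  exact sum_attach (piAntidiag univ m) (fun g => ∏ i, coeff (g i) φ)

theorem coeff_pow_eq_sum_of_constantCoeff_eq_zero {φ : R⟦X⟧} (hφ : constantCoeff φ = 0)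
    (k m : ℕ) :
    coeff m (φ ^ k) = ∑ g ∈ (Nat.antidiagonalTuple k m).filter (fun g => ∀ i, g i ≠ 0),
      ∏ i, coeff (g i) φ := by
  rw [coeff_pow_eq_sum_antidiagonalTuple, sum_filter_of_ne]
  intro g _ hg i hi
  exact hg (prod_eq_zero (mem_univ i) (by rw [hi, coeff_zero_eq_constantCoeff_apply, hφ]))

open Nat in
theorem coeff_exp_sub_one_pow (k m : ℕ) :
    coeff m ((exp ℚ - 1) ^ k) = (numSurjections m k / m ! : ℚ) := by
  rw [coeff_pow_eq_sum_of_constantCoeff_eq_zero (by simp), numSurjections, cast_sum, sum_div]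
  refine sum_congr rfl fun g hg => ?_
  rw [mem_filter, Finset.Nat.mem_antidiagonalTuple] at hg
  have hcoeff (i : Fin k) : coeff (g i) (exp ℚ - 1) = ((g i) ! : ℚ)⁻¹ := by
    simp [coeff_exp, coeff_one, hg.2 i]
  have hmult : (multinomial univ g : ℚ) ≠ 0 := cast_ne_zero.2 (multinomial_pos _ _).ne'
  rw [prod_congr rfl fun i _ => hcoeff i, prod_inv_distrib, ← hg.1, ← multinomial_spec]
  push_cast
  field_simp

end PowerSeries

namespace Nat

open PowerSeries in
theorem pow_eq_sum_choose_mul_numSurjections (n m : ℕ) :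
    n ^ m = ∑ k ∈ range (m + 1), n.choose k * numSurjections m k := by
  have hexp : coeff m (exp ℚ ^ n) = n ^ m / (m ! : ℚ) := by
    simp [exp_pow_eq_rescale_exp, coeff_rescale, coeff_exp, div_eq_mul_inv]
  have hbinom : exp ℚ ^ n = ∑ k ∈ range (n + 1), (exp ℚ - 1) ^ k * (n.choose k : ℚ⟦X⟧) := by
    simpa using add_pow (exp ℚ - 1) 1 n
  have hterm (k : ℕ) : coeff m ((exp ℚ - 1) ^ k * (n.choose k : ℚ⟦X⟧)) =
      (n.choose k * numSurjections m k / m ! : ℚ) := by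
    rw [← map_natCast C, coeff_mul_C, coeff_exp_sub_one_pow, mul_comm, mul_div_assoc]
  calc n ^ m = ∑ k ∈ range (n + 1), n.choose k * numSurjections m k := by
        rw [hbinom, map_sum, sum_congr rfl fun k _ => hterm k, ← sum_div,
          div_left_inj' (cast_ne_zero.2 (factorial_ne_zero m))] at hexp
        exact_mod_cast hexp.symm
    _ = ∑ k ∈ range (n + m + 1), n.choose k * numSurjections m k := by
        refine sum_subset (range_subset_range.2 (by omega)) fun k _ hk => ?_
        rw [choose_eq_zero_of_lt (by simpa using hk), zero_mul]
    _ = ∑ k ∈ range (m + 1), n.choose k * numSurjections m k := by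
        refine (sum_subset (range_subset_range.2 (by omega)) fun k _ hk => ?_).symm
        rw [numSurjections_eq_zero_of_lt (by simpa using hk), mul_zero]

end Nat

namespace Ring

open Nat Polynomial

variable {R : Type*} [CommRing R] [BinomialRing R]

theorem aeval_factorial_smul_X_pow_sub_sum_descPochhammer {m : ℕ} {s : Finset ℕ}
    (hs : ∀ k ∈ s, k ≤ m) (c : ℕ → ℕ) (r : R) :
    aeval r (m ! • X ^ m - ∑ k ∈ s, (c k * (m ! / k !)) • descPochhammer ℤ k) =
      m ! • (r ^ m - ∑ k ∈ s, c k • choose r k) := by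
  simp only [map_sub, map_nsmul, map_pow, aeval_X, map_sum, smul_sub, smul_sum]
  congr 1
  refine sum_congr rfl fun k hk => ?_
  rw [aeval_eq_smeval, descPochhammer_eq_factorial_smul_choose, smul_smul, smul_smul, mul_assoc,
    Nat.div_mul_cancel (factorial_dvd_factorial (hs k hk)), mul_comm]

theorem pow_eq_sum_smul_choose_of_forall_natCast {m : ℕ} {s : Finset ℕ} (hs : ∀ k ∈ s, k ≤ m)
    (c : ℕ → ℕ) (h : ∀ n : ℕ, n ^ m = ∑ k ∈ s, c k * n.choose k) (r : R) :
    r ^ m = ∑ k ∈ s, c k • choose r k := by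
  have hQ : (m ! • X ^ m - ∑ k ∈ s, (c k * (m ! / k !)) • descPochhammer ℤ k : ℤ[X]) = 0 := by
    refine eq_zero_of_infinite_isRoot _
      (Set.infinite_of_injective_forall_mem Nat.cast_injective fun n : ℕ => ?_)
    rw [Set.mem_ofPred_eq, IsRoot, ← coe_aeval_eq_eval,
      aeval_factorial_smul_X_pow_sub_sum_descPochhammer hs c]
    have hn : (n : ℤ) ^ m = ∑ k ∈ s, c k * (n.choose k : ℤ) := by exact_mod_cast h n
    simp [choose_natCast, hn]
  have hr := aeval_factorial_smul_X_pow_sub_sum_descPochhammer hs c r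
  rw [hQ, map_zero] at hr
  have := BinomialRing.toIsAddTorsionFree (R := R)
  exact sub_eq_zero.1 (IsAddTorsionFree.nsmul_right_injective (factorial_ne_zero m)
    (hr.symm.trans (smul_zero _).symm))

theorem pow_eq_sum_numSurjections_smul_choose (r : R) (m : ℕ) :
    r ^ m = ∑ k ∈ range (m + 1), numSurjections m k • choose r k :=
  pow_eq_sum_smul_choose_of_forall_natCast (fun _ => mem_range_succ_iff.1) _
    (fun n => by simp_rw [pow_eq_sum_choose_mul_numSurjections n m, mul_comm]) r

end Ring

theorem DividedPowers.sum_prod_dpow_eq_numSurjections_smul {A : Type*} [CommSemiring A]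
    {I : Ideal A} (hI : DividedPowers I) {x : A} (hx : x ∈ I) (k m : ℕ) :
    ∑ g ∈ (Finset.Nat.antidiagonalTuple k m).filter (fun g => ∀ i, g i ≠ 0),
      ∏ i, hI.dpow (g i) x = Nat.numSurjections m k • hI.dpow m x := by
  rw [Nat.numSurjections, sum_smul]
  refine sum_congr rfl fun g hg => ?_
  rw [hI.prod_dpow hx, Finset.Nat.mem_antidiagonalTuple.1 (mem_filter.1 hg).1, nsmul_eq_mul]

/-- over a binomial ring `B`, in a divided power algebra over `B`, for any
`a ∈ B` and `m ≥ 1`: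
`a^m x^{[m]} = Σ_{k=1}^{m} binom(a,k) Σ_{g₁+⋯+g_k = m, g_i ≥ 1} x^{[g₁]} ⋯ x^{[g_k]}`. -/
theorem pow_smul_dpow_eq_sum_choose {B A : Type*} [CommRing B] [BinomialRing B]
    [CommRing A] [Algebra B A] {I : Ideal A} (hI : DividedPowers I)
    (a : B) {x : A} (hx : x ∈ I) {m : ℕ} (hm : 1 ≤ m) :
    algebraMap B A a ^ m * hI.dpow m x =
      ∑ k ∈ Finset.Icc 1 m, algebraMap B A (Ring.choose a k) *
        ∑ g ∈ (Finset.Nat.antidiagonalTuple k m).filter (fun g => ∀ i, g i ≠ 0),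
          ∏ i, hI.dpow (g i) x := by
  simp_rw [hI.sum_prod_dpow_eq_numSurjections_smul hx]
  calc algebraMap B A a ^ m * hI.dpow m x
      = ∑ k ∈ range (m + 1), algebraMap B A (Ring.choose a k) *
          Nat.numSurjections m k • hI.dpow m x := by
        rw [← map_pow, Ring.pow_eq_sum_numSurjections_smul_choose a m, map_sum, sum_mul]
        simp_rw [map_nsmul, smul_mul_assoc, mul_smul_comm]
    _ = _ := by
        rw [range_eq_Ico, sum_eq_sum_Ico_succ_bot (by omega),
          Nat.numSurjections_zero_right (by omega), zero_smul, mul_zero, zero_add,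
          Ico_add_one_right_eq_Icc]
end

section
/- Let r be an element of a binomial ring B (or an integer), and let w₁,...,w_q be natural numbers. Then Π_{j=1}^q binom(r, w_j) = Σ_{m=0}^{∞} binom(r,m) Σ_{k=0}^{m} (-1)^{m-k} binom(m,k) Π_{j=1}^q binom(k, w_j), where the outer sum has finitely many nonzero terms (m ≤ w₁+⋯+w_q suffices). -/
/-!
With `f x = ∏ j, Ring.choose x (w j)`, the inner sum is the iterated forward difference
`Δ^m f 0`, so the claim is Newton's interpolation formula `f r = ∑ m, choose r m • Δ^m f 0`.
Since `(∏ j, (w j)!) • f` is evaluation of an integer polynomial of degree `∑ j, w j`, it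
suffices to prove Newton's formula for integer polynomials `P`. For natural arguments this is
the Gregory–Newton formula, the differences of order above `deg P` being zero. Multiplied by
`N!`, both sides become evaluations of integer polynomials (`m! • choose r m` is a descending
Pochhammer polynomial), which agree at all naturals and hence coincide; as `B` is torsion-free,
the factorials cancel.
-/

open Finset Polynomial fwdDiff

attribute [local instance] BinomialRing.toIsAddTorsionFree

theorem Polynomial.eval_natCast_eq_sum_fwdDiff_iter {R : Type*} [CommRing R] (P : R[X]) {N : ℕ}
    (hP : P.natDegree ≤ N) (n : ℕ) :
    P.eval (n : R) = ∑ m ∈ range (N + 1), n.choose m • Δ_[1] ^[m] P.eval 0 := by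
  have hnewton := shift_eq_sum_fwdDiff_iter 1 P.eval n 0
  rw [zero_add, nsmul_one] at hnewton
  rw [hnewton, sum_subset (range_subset_range.mpr (Nat.succ_le_succ (le_max_left n N))),
    sum_subset (range_subset_range.mpr (Nat.succ_le_succ (le_max_right n N)))]
  · intro m _ hm
    rw [fwdDiff_iter_eq_zero_of_degree_lt (by simp only [mem_range, not_lt] at hm; omega),
      Pi.zero_apply, smul_zero]
  · intro m _ hm
    rw [Nat.choose_eq_zero_of_lt (by simp only [mem_range, not_lt] at hm; omega), zero_smul]

theorem Polynomial.intCast_fwdDiff_iter_eval_zero {B : Type*} [CommRing B] (P : ℤ[X]) (m : ℕ) :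
    ((Δ_[1] ^[m] P.eval 0 : ℤ) : B) = Δ_[1] ^[m] (fun x : B ↦ aeval x P) 0 := by
  have hcast (k : ℕ) : ((P.eval (k : ℤ) : ℤ) : B) = aeval (k : B) P := by
    simpa using (aeval_algebraMap_apply_eq_algebraMap_eval (R := ℤ) (A := B) (k : ℤ) P).symm
  simp [fwdDiff_iter_eq_sum_shift, hcast]

section BinomialRing

variable {B : Type*} [CommRing B] [BinomialRing B]

theorem Polynomial.aeval_descPochhammer (r : B) (n : ℕ) :
    aeval r (descPochhammer ℤ n) = n.factorial • Ring.choose r n := by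
  rw [aeval_eq_smeval, Ring.descPochhammer_eq_factorial_smul_choose]

theorem Polynomial.factorial_smul_eq_sum_descPochhammer (P : ℤ[X]) {N : ℕ}
    (hP : P.natDegree ≤ N) :
    N.factorial • P = ∑ m ∈ range (N + 1),
      ((N.factorial / m.factorial : ℕ) * Δ_[1] ^[m] P.eval 0) • descPochhammer ℤ m := by
  refine eq_of_infinite_eval_eq _ _ ((Set.infinite_range_of_injective Nat.cast_injective).mono ?_)
  rintro _ ⟨n, rfl⟩
  have hdesc (m : ℕ) : (descPochhammer ℤ m).eval (n : ℤ) = m.factorial * n.choose m := by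
    rw [← coe_aeval_eq_eval, aeval_descPochhammer, Ring.choose_natCast, nsmul_eq_mul]
  simp only [Set.mem_ofPred_eq, eval_finsetSum, eval_smul, smul_eq_mul, nsmul_eq_mul, eval_mul,
    eval_natCast, hdesc, P.eval_natCast_eq_sum_fwdDiff_iter hP n, mul_sum]
  refine sum_congr rfl fun m hm ↦ ?_
  have hfac : ((N.factorial / m.factorial : ℕ) : ℤ) * m.factorial = N.factorial := by
    exact_mod_cast Nat.div_mul_cancel
      (Nat.factorial_dvd_factorial (Nat.lt_succ_iff.mp (mem_range.mp hm)))
  linear_combination -(n.choose m * Δ_[1] ^[m] P.eval 0 : ℤ) * hfac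

theorem Polynomial.aeval_eq_sum_choose_mul_fwdDiff_iter (P : ℤ[X]) {N : ℕ}
    (hP : P.natDegree ≤ N) (r : B) :
    aeval r P =
      ∑ m ∈ range (N + 1), Ring.choose r m * Δ_[1] ^[m] (fun x : B ↦ aeval x P) 0 := by
  refine nsmul_right_injective (Nat.factorial_ne_zero N) ?_
  dsimp only
  rw [← map_nsmul, P.factorial_smul_eq_sum_descPochhammer hP, map_sum, smul_sum]
  refine sum_congr rfl fun m hm ↦ ?_
  have hfac : ((N.factorial / m.factorial : ℕ) : B) * m.factorial = N.factorial := by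
    rw [← Nat.cast_mul, Nat.div_mul_cancel
      (Nat.factorial_dvd_factorial (Nat.lt_succ_iff.mp (mem_range.mp hm)))]
  rw [map_zsmul, aeval_descPochhammer, ← intCast_fwdDiff_iter_eval_zero]
  simp only [zsmul_eq_mul, nsmul_eq_mul, Int.cast_mul, Int.cast_natCast]
  linear_combination (Ring.choose r m * (Δ_[1] ^[m] P.eval 0 : ℤ)) * hfac

theorem eq_sum_choose_mul_fwdDiff_iter_of_nsmul_eq_aeval {f : B → B} {K : ℕ} (hK : K ≠ 0)
    (P : ℤ[X]) {N : ℕ} (hP : P.natDegree ≤ N) (hf : ∀ x, K • f x = aeval x P) (r : B) :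
    f r = ∑ m ∈ range (N + 1), Ring.choose r m * Δ_[1] ^[m] f 0 := by
  have hPf : (fun x ↦ aeval x P) = K • f := funext fun x ↦ (hf x).symm
  refine nsmul_right_injective hK ?_
  dsimp only
  rw [hf, P.aeval_eq_sum_choose_mul_fwdDiff_iter hP, hPf, smul_sum]
  simp only [fwdDiff_iter_const_smul, Pi.smul_apply, mul_smul_comm]

end BinomialRing

/-- in a binomial ring `B`, for `r ∈ B` and natural numbers `w₁,…,w_q`,
`Π_j binom(r, w_j) = Σ_{m} binom(r,m) Σ_{k=0}^{m} (-1)^{m-k} binom(m,k) Π_j binom(k, w_j)`,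
where the outer sum may be truncated at `m = w₁ + ⋯ + w_q`. -/
theorem prod_choose_eq_sum_choose {B : Type*} [CommRing B] [BinomialRing B]
    (r : B) (q : ℕ) (w : Fin q → ℕ) :
    ∏ j, Ring.choose r (w j) =
      ∑ m ∈ Finset.range (∑ j, w j + 1), Ring.choose r m *
        ∑ k ∈ Finset.range (m + 1),
          (-1 : B) ^ (m - k) * (m.choose k : B) * ∏ j, Ring.choose (k : B) (w j) := by
  have hdeg : (∏ j, descPochhammer ℤ (w j)).natDegree ≤ ∑ j, w j :=
    (natDegree_prod_le _ _).trans (by simp [descPochhammer_natDegree])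
  have hprod (x : B) : (∏ j, (w j).factorial) • ∏ j, Ring.choose x (w j) =
      aeval x (∏ j, descPochhammer ℤ (w j)) := by
    simp [map_prod, aeval_descPochhammer, nsmul_eq_mul, prod_mul_distrib]
  refine (eq_sum_choose_mul_fwdDiff_iter_of_nsmul_eq_aeval
    (prod_ne_zero_iff.mpr fun j _ ↦ (w j).factorial_ne_zero) _ hdeg hprod r).trans
    (sum_congr rfl fun m _ ↦ ?_)
  simp [fwdDiff_iter_eq_sum_shift]
end

section
/- The deviation of the canonical projections is idempotent: if π₁,...,π_k are the canonical projection idempotents of M₁ ⊕ ⋯ ⊕ M_k and F is any functor on modules, then F(π₁|⋯|π_k) is an idempotent endomorphism of F(M₁ ⊕ ⋯ ⊕ M_k). -/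
open Finset CategoryTheory

/-!
Write `g I = F (∑ i ∈ I, πᵢ)`. As the `πᵢ` are orthogonal idempotents and `F` preserves
composition, `g I * g J = g (I ∩ J)`. Let `D` be the deviation. For `I ≠ univ` pick `j ∉ I`:
in `g I * D` the terms indexed by `J` and `insert j J` cancel, so `g I * D = 0`, while
`g univ * D = D`. Expanding `D * D = ∑ ± g I * D` therefore leaves only `D`.
-/

theorem neg_one_pow_sub_eq_mul {R : Type*} [Monoid R] [HasDistribNeg R] {m n : ℕ} (h : m ≤ n) :
    (-1 : R) ^ (n - m) = (-1) ^ n * (-1) ^ m := by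
  obtain ⟨d, rfl⟩ := Nat.exists_eq_add_of_le h
  rw [Nat.add_sub_cancel_left, pow_add, ((Commute.neg_one_left _).pow_left m).eq, mul_assoc,
    ← pow_add, Even.neg_one_pow ⟨m, rfl⟩, mul_one]

theorem Finset.sum_powerset_neg_one_pow_card_smul_eq_zero {ι M : Type*} [DecidableEq ι]
    [AddCommGroup M] {s : Finset ι} {j : ι} (hj : j ∈ s) (f : Finset ι → M)
    (hf : ∀ J, f (insert j J) = f J) :
    ∑ J ∈ s.powerset, (-1 : ℤ) ^ J.card • f J = 0 := by
  rw [← insert_erase hj, sum_powerset_insert (notMem_erase j s), ← sum_add_distrib]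
  refine sum_eq_zero fun J hJ ↦ ?_
  have hjJ : j ∉ J := fun h ↦ notMem_erase j s (mem_powerset.1 hJ h)
  rw [hf, card_insert_of_notMem hjJ, pow_succ, mul_neg_one, neg_smul, add_neg_cancel]

theorem OrthogonalIdempotents.sum_mul_sum {A ι : Type*} [Semiring A] {e : ι → A}
    [DecidableEq ι] (he : OrthogonalIdempotents e) (s t : Finset ι) :
    (∑ i ∈ s, e i) * ∑ j ∈ t, e j = ∑ i ∈ s ∩ t, e i := by
  rw [sum_mul, ← sum_filter_add_sum_filter_not s (· ∈ t),
    sum_congr rfl fun i hi ↦ he.mul_sum_of_mem (mem_filter.1 hi).2,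
    sum_eq_zero fun i hi ↦ he.mul_sum_of_notMem (mem_filter.1 hi).2, add_zero,
    filter_mem_eq_inter]

theorem LinearMap.orthogonalIdempotents_single_comp_proj (R : Type*) {ι : Type*} [Semiring R]
    [DecidableEq ι] (φ : ι → Type*) [∀ i, AddCommMonoid (φ i)] [∀ i, Module R (φ i)] :
    OrthogonalIdempotents fun i ↦
      (LinearMap.single R φ i ∘ₗ LinearMap.proj i : Module.End R (∀ i, φ i)) where
  idem i := by
    rw [IsIdempotentElem, Module.End.mul_eq_comp, LinearMap.comp_assoc,
      ← LinearMap.comp_assoc _ _ (LinearMap.proj i), LinearMap.proj_comp_single_same,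
      LinearMap.id_comp]
  ortho i j hij := by
    dsimp only
    rw [Module.End.mul_eq_comp, LinearMap.comp_assoc,
      ← LinearMap.comp_assoc _ _ (LinearMap.proj i), LinearMap.proj_comp_single_ne R φ i j hij,
      LinearMap.zero_comp, LinearMap.comp_zero]

theorem isIdempotentElem_sum_powerset_neg_one_pow_smul {ι A : Type*} [Fintype ι] [DecidableEq ι]
    [Ring A] (g : Finset ι → A) (hg : ∀ I J, g I * g J = g (I ∩ J)) :
    IsIdempotentElem
      (∑ I ∈ (univ : Finset ι).powerset, (-1 : ℤ) ^ (Fintype.card ι - I.card) • g I) := by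
  set e := ∑ I ∈ (univ : Finset ι).powerset, (-1 : ℤ) ^ (Fintype.card ι - I.card) • g I
  have sign (J : Finset ι) : (-1 : ℤ) ^ (Fintype.card ι - J.card) =
      (-1) ^ Fintype.card ι * (-1) ^ J.card :=
    neg_one_pow_sub_eq_mul (card_le_univ J)
  have hvanish (I : Finset ι) (hI : I ≠ univ) : g I * e = 0 := by
    obtain ⟨j, -, hj⟩ := exists_of_ssubset (ssubset_univ_iff.2 hI)
    simp only [e, mul_sum, mul_smul_comm, hg, sign, mul_smul, ← smul_sum]
    rw [sum_powerset_neg_one_pow_card_smul_eq_zero (mem_univ j) _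
      fun J ↦ by rw [inter_insert_of_notMem hj], smul_zero]
  have hunit : g univ * e = e := by
    simp only [e, mul_sum, mul_smul_comm, hg, univ_inter]
  show e * e = e
  rw [sum_mul, sum_eq_single_of_mem univ (mem_powerset_self _)
      fun I _ hI ↦ by rw [smul_mul_assoc, hvanish I hI, smul_zero],
    smul_mul_assoc, hunit, card_univ, Nat.sub_self, pow_zero, one_smul]

theorem functorDeviation_isIdempotentElem {R : Type} [Ring R] (F : ModuleCat R ⥤ ModuleCat R)
    {M : ModuleCat R} {ι : Type} [Fintype ι] [DecidableEq ι] {f : ι → End M}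
    (hf : OrthogonalIdempotents f) :
    IsIdempotentElem (M := End (F.obj M)) (functorDeviation F f) :=
  isIdempotentElem_sum_powerset_neg_one_pow_smul (fun I ↦ Functor.mapEnd M F (∑ i ∈ I, f i))
    fun I J ↦ by rw [← map_mul, hf.sum_mul_sum]

/-- for the canonical projection idempotents `π₁,…,π_k` of
`M₁ ⊕ ⋯ ⊕ M_k` and any functor `F`, the deviation `F(π₁|⋯|π_k)` is an idempotent
endomorphism of `F(M₁ ⊕ ⋯ ⊕ M_k)`. -/
theorem functorDeviation_proj_idempotent {R : Type} [Ring R]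
    (F : ModuleCat R ⥤ ModuleCat R) (k : ℕ) (M : Fin k → ModuleCat R) :
    let T : ModuleCat R := ModuleCat.of R (∀ i, M i)
    let π : Fin k → (T ⟶ T) := fun i =>
      ModuleCat.ofHom ((LinearMap.single R (fun i => M i) i).comp (LinearMap.proj i))
    functorDeviation F π ≫ functorDeviation F π = functorDeviation F π := by
  intro T π
  have hπ : OrthogonalIdempotents (R := End T) π :=
    (LinearMap.orthogonalIdempotents_single_comp_proj R fun i ↦ M i).map
      (ModuleCat.endRingEquiv T).symm.toRingHom
  exact (functorDeviation_isIdempotentElem F hπ).eq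
end

section
/- Divided power composition is multiplicative: if A is the (possibly non-unital) algebra on the free module spanned by columns [a//b] with product [b'//c]∘[a//b] = δ_{b,b'}[a//c], then the rule u^{[n]} ∘ v^{[n]} = (u ∘ v)^{[n]} for u, v ∈ A defines an associative bilinear composition on the degree-n divided power module Γ^n(A). -/
/-! Under `[a // c] ↦ E_{c a}` the column algebra `A` is the matrix algebra `M_S(B)`, so its
`n`-th tensor power is `M_{S^n}(B)`, in which `u^{⊗n}` is the matrix `(c, a) ↦ ∏ₖ u(aₖ, cₖ)`.
Reading the coefficient of a multiset basis element of `Γ^n(A)` off every tuple enumerating it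
embeds `Γ^n(A)` in `M_{S^n}(B)` and sends `u^{[n]}` to `u^{⊗n}`. The image consists of matrices
invariant under simultaneous permutation of the `n` tensor factors, and these are closed under
multiplication. Transporting the matrix product back along a left inverse of the embedding gives
the composition: it is multiplicative on divided powers because `u^{⊗n} v^{⊗n} = (uv)^{⊗n}`, and
associative because the left inverse is a two-sided inverse on invariant matrices. -/

open Finset

/-- The degree-`n` divided power module of the free module `ι →₀ B`: free on multisets
of basis elements of cardinality `n`. -/
abbrev DividedPowerModule (B : Type*) [CommRing B] (ι : Type*) (n : ℕ) :=
  Sym ι n →₀ B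

/-- The divided `n`-th power `u^{[n]}` of an element `u` of the free module `ι →₀ B`,
expanded in the multiset basis: `u^{[n]} = Σ_{|m| = n} (Π_i u_i^{m(i)}) e_m`. -/
noncomputable def dividedPower {B : Type*} [CommRing B] {ι : Type*} [DecidableEq ι]
    (n : ℕ) (u : ι →₀ B) : DividedPowerModule B ι n :=
  ∑ m ∈ u.support.sym n,
    Finsupp.single m (∏ i ∈ (m : Multiset ι).toFinset, u i ^ (m : Multiset ι).count i)

/-- The column algebra on a set `S`: the free module on columns `[a // b]`, `a b ∈ S`,
with product `[b' // c] ∘ [a // b] = δ_{b,b'} [a // c]`; here `u` is the outer factor. -/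
noncomputable def colMul {B : Type*} [CommRing B] {S : Type*} [DecidableEq S]
    (u v : S × S →₀ B) : S × S →₀ B :=
  u.sum fun p x => v.sum fun q y =>
    if q.2 = p.1 then Finsupp.single (q.1, p.2) (x * y) else 0

namespace Sym

variable {α : Type*} {n : ℕ}

def ofFn (f : Fin n → α) : Sym α n :=
  ⟨List.ofFn f, by simp⟩

theorem ofFn_comp_perm (f : Fin n → α) (σ : Equiv.Perm (Fin n)) : ofFn (f ∘ σ) = ofFn f :=
  Subtype.ext (Multiset.coe_eq_coe.mpr (σ.ofFn_comp_perm f))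

theorem ofFn_surjective : Function.Surjective (ofFn : (Fin n → α) → Sym α n) := by
  intro m
  have hlen : m.1.toList.length = n := by simp
  refine ⟨fun k => m.1.toList.get (k.cast hlen.symm), Subtype.ext ?_⟩
  change ((List.ofFn fun k => m.1.toList.get (k.cast hlen.symm) : List α) : Multiset α) = m.1
  rw [← List.ofFn_congr hlen, List.ofFn_get, Multiset.coe_toList]

theorem card_fiber_eq_count_ofFn [DecidableEq α] (f : Fin n → α) (a : α) :
    Nat.card {k // f k = a} = (ofFn f : Multiset α).count a := by
  simp [ofFn, ← Fin.univ_val_map, Multiset.count_map, Nat.card_eq_fintype_card,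
    Fintype.card_subtype, Finset.card, eq_comm]

theorem exists_comp_perm_eq_of_ofFn_eq {f g : Fin n → α} (h : ofFn f = ofFn g) :
    ∃ σ : Equiv.Perm (Fin n), f ∘ σ = g := by
  classical
  have e (a : α) : {k // g k = a} ≃ {k // f k = a} := Classical.choice <| Finite.card_eq.mp <| by
    rw [card_fiber_eq_count_ofFn, card_fiber_eq_count_ofFn, h]
  exact ⟨Equiv.ofFiberEquiv e, funext (Equiv.ofFiberEquiv_map e)⟩

end Sym

section

variable {B : Type*} [CommRing B]

theorem dividedPower_apply {ι : Type*} [DecidableEq ι] {n : ℕ} (u : ι →₀ B) (m : Sym ι n) :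
    dividedPower n u m = ∏ i ∈ (m : Multiset ι).toFinset, u i ^ (m : Multiset ι).count i := by
  simp only [dividedPower, Finset.sum_apply', Finsupp.single_apply, Finset.sum_ite_eq']
  split_ifs with hm
  · rfl
  · obtain ⟨i, him, hi⟩ : ∃ i ∈ (m : Multiset ι), u i = 0 := by
      simpa [Finset.mem_sym_iff] using hm
    refine (Finset.prod_eq_zero (Multiset.mem_toFinset.mpr him) ?_).symm
    rw [hi, zero_pow (Multiset.count_pos.mpr him).ne']

theorem dividedPower_apply_ofFn {ι : Type*} [DecidableEq ι] {n : ℕ} (u : ι →₀ B)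
    (f : Fin n → ι) : dividedPower n u (Sym.ofFn f) = ∏ k, u (f k) := by
  rw [dividedPower_apply, ← Finset.prod_multiset_map_count]
  simp [Sym.ofFn, List.prod_ofFn]

def colMatrix {S : Type*} (u : S × S →₀ B) : Matrix S S B :=
  Matrix.of fun c a => u (a, c)

theorem colMatrix_colMul {S : Type*} [Fintype S] [DecidableEq S] (u v : S × S →₀ B) :
    colMatrix (colMul u v) = colMatrix u * colMatrix v := by
  ext c a
  simp [colMatrix, colMul, Matrix.mul_apply, Finsupp.sum_fintype, Finsupp.finsetSum_apply,
    Finsupp.single_apply, Fintype.sum_prod_type, ite_and]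

namespace Matrix

variable {S : Type*} {n : ℕ}

def tensorPow (M : Matrix S S B) : Matrix (Fin n → S) (Fin n → S) B :=
  of fun c a => ∏ k, M (c k) (a k)

theorem tensorPow_mul [Fintype S] (M N : Matrix S S B) :
    (M.tensorPow * N.tensorPow : Matrix (Fin n → S) (Fin n → S) B) = (M * N).tensorPow := by
  classical
  ext c a
  simp only [tensorPow, mul_apply, of_apply, ← Finset.prod_mul_distrib, Fintype.prod_sum]

def IsPermInvariant (M : Matrix (Fin n → S) (Fin n → S) B) : Prop :=
  ∀ (σ : Equiv.Perm (Fin n)) (c a : Fin n → S), M (c ∘ σ) (a ∘ σ) = M c a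

theorem IsPermInvariant.mul [Fintype S] {M N : Matrix (Fin n → S) (Fin n → S) B}
    (hM : M.IsPermInvariant) (hN : N.IsPermInvariant) : (M * N).IsPermInvariant := by
  classical
  intro σ c a
  simp only [mul_apply]
  refine Fintype.sum_equiv (σ.arrowCongr (Equiv.refl S)) _ _ fun e => ?_
  have he : σ.arrowCongr (Equiv.refl S) e ∘ σ = e := by ext; simp
  rw [← hM σ c, ← hN σ _ a, he]

end Matrix

namespace DividedPowerModule

variable {S : Type*} {n : ℕ}

def toMatrix : DividedPowerModule B (S × S) n →ₗ[B] Matrix (Fin n → S) (Fin n → S) B where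
  toFun x := Matrix.of fun c a => x (Sym.ofFn fun k => (a k, c k))
  map_add' _ _ := rfl
  map_smul' _ _ := rfl

theorem toMatrix_apply (x : DividedPowerModule B (S × S) n) (c a : Fin n → S) :
    toMatrix x c a = x (Sym.ofFn fun k => (a k, c k)) := rfl

theorem toMatrix_isPermInvariant (x : DividedPowerModule B (S × S) n) :
    (toMatrix x).IsPermInvariant := fun σ c a =>
  congrArg x (Sym.ofFn_comp_perm (fun k => (a k, c k)) σ)

theorem toMatrix_dividedPower [DecidableEq S] (u : S × S →₀ B) :
    toMatrix (dividedPower n u) = (colMatrix u).tensorPow := by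
  ext c a
  simp [toMatrix_apply, dividedPower_apply_ofFn, Matrix.tensorPow, colMatrix]

noncomputable def ofMatrix [Finite S] :
    Matrix (Fin n → S) (Fin n → S) B →ₗ[B] DividedPowerModule B (S × S) n where
  toFun M := Finsupp.equivFunOnFinite.symm fun m =>
    let f := Function.surjInv Sym.ofFn_surjective m
    M (fun k => (f k).2) (fun k => (f k).1)
  map_add' _ _ := by ext; simp
  map_smul' _ _ := by ext; simp

theorem ofMatrix_apply [Finite S] (M : Matrix (Fin n → S) (Fin n → S) B) (m : Sym (S × S) n) :
    ofMatrix M m = M (fun k => (Function.surjInv Sym.ofFn_surjective m k).2)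
      (fun k => (Function.surjInv Sym.ofFn_surjective m k).1) := rfl

theorem ofMatrix_toMatrix [Finite S] (x : DividedPowerModule B (S × S) n) :
    ofMatrix (toMatrix x) = x := by
  ext m
  rw [ofMatrix_apply, toMatrix_apply]
  exact congrArg x (Function.surjInv_eq Sym.ofFn_surjective m)

theorem toMatrix_ofMatrix [Finite S] {M : Matrix (Fin n → S) (Fin n → S) B}
    (hM : M.IsPermInvariant) : toMatrix (ofMatrix M) = M := by
  ext c a
  obtain ⟨σ, hσ⟩ := Sym.exists_comp_perm_eq_of_ofFn_eq
    (Function.surjInv_eq Sym.ofFn_surjective (Sym.ofFn fun k => (a k, c k)))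
  rw [toMatrix_apply, ofMatrix_apply, ← hM σ]
  simp only [funext_iff, Function.comp_apply, Prod.ext_iff] at hσ
  congr 1 <;> ext k <;> simp [hσ]

variable (B S n) in
noncomputable def comp [Fintype S] :
    DividedPowerModule B (S × S) n →ₗ[B] DividedPowerModule B (S × S) n →ₗ[B]
      DividedPowerModule B (S × S) n :=
  ((LinearMap.mul B _).compl₁₂ toMatrix toMatrix).compr₂ ofMatrix

theorem comp_apply [Fintype S] (x y : DividedPowerModule B (S × S) n) :
    comp B S n x y = ofMatrix (toMatrix x * toMatrix y) := rfl

end DividedPowerModule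

end

/-- the rule `u^{[n]} ∘ v^{[n]} = (u ∘ v)^{[n]}` on pure divided powers
extends to a well-defined bilinear associative composition on `Γ^n(A)`, `A` the column
algebra. -/
theorem dividedPower_composition_exists {B : Type*} [CommRing B]
    {S : Type*} [Fintype S] [DecidableEq S] (n : ℕ) :
    ∃ comp : DividedPowerModule B (S × S) n →ₗ[B]
        DividedPowerModule B (S × S) n →ₗ[B] DividedPowerModule B (S × S) n,
      (∀ u v : S × S →₀ B,
        comp (dividedPower n u) (dividedPower n v) = dividedPower n (colMul u v)) ∧
      (∀ x y z : DividedPowerModule B (S × S) n,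
        comp (comp x y) z = comp x (comp y z)) := by
  refine ⟨DividedPowerModule.comp B S n, fun u v => ?_, fun x y z => ?_⟩
  · rw [DividedPowerModule.comp_apply, DividedPowerModule.toMatrix_dividedPower,
      DividedPowerModule.toMatrix_dividedPower, Matrix.tensorPow_mul, ← colMatrix_colMul,
      ← DividedPowerModule.toMatrix_dividedPower, DividedPowerModule.ofMatrix_toMatrix]
  · have hinv := DividedPowerModule.toMatrix_isPermInvariant (B := B) (S := S) (n := n)
    simp only [DividedPowerModule.comp_apply, Matrix.mul_assoc,
      DividedPowerModule.toMatrix_ofMatrix ((hinv _).mul (hinv _))]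
end

section
/- Let A_n map a maze P (a multi-set of labelled passages) to Σ over multi-sets A with support P and |A| = n of Π_{p: x→y in P} (label p)^{deg_A p} · [x//y]^{[deg_A p]} in the multi-set category MSet_n. Then A_n respects the labyrinth relation: A_n(P ∪ {passage a+b from u to v}) = A_n(P ∪ {passage a}) + A_n(P ∪ {passage b}) + A_n(P ∪ {passages a and b}). -/
/-!
Attach to a column `c` with divided powers `c m = [x//y]^{[m]}` and a label `a` the series
`exp(a c t) = Σ_m a^m c_m t^m`. The divided-power relation is exactly
`exp((a + b) c t) = exp(a c t) · exp(b c t)`, so the passage series `f_a = exp(a c t) - c_0`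
satisfies `f_{a+b} = f_a + f_b + f_a f_b`. The Ariadne sum `A_n(P)` is the `t^n`-coefficient of
the product of the passage series over `P` (their constant terms vanish, which is what restricts
the sum to multiplicities `≥ 1`), so multiplying that identity by the series of the rest of the
maze gives the labyrinth relation.
-/

open Finset PowerSeries

theorem PowerSeries.coeff_prod_fin {R : Type*} [CommSemiring R] {k : ℕ}
    (f : Fin k → PowerSeries R) (n : ℕ) :
    coeff n (∏ i, f i) = ∑ g ∈ Nat.antidiagonalTuple k n, ∏ i, coeff (g i) (f i) := by
  rw [coeff_prod, finsuppAntidiag, sum_map, ← piAntidiag_univ_fin_eq_antidiagonalTuple]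
  exact sum_attach _ (fun g : Fin k → ℕ => ∏ i, coeff (g i) (f i))

theorem PowerSeries.coeff_prod_fin_of_constantCoeff_eq_zero {R : Type*} [CommSemiring R]
    {k : ℕ} (f : Fin k → PowerSeries R) (hf : ∀ i, constantCoeff (f i) = 0) (n : ℕ) :
    coeff n (∏ i, f i) =
      ∑ g ∈ (Nat.antidiagonalTuple k n).filter (fun g => ∀ i, g i ≠ 0),
        ∏ i, coeff (g i) (f i) := by
  rw [coeff_prod_fin, sum_filter_of_ne]
  intro g _ hprod i hi
  exact hprod (prod_eq_zero (mem_univ i) (by rw [hi, coeff_zero_eq_constantCoeff, hf]))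

section DividedPowers

variable {B Γ : Type*} [CommSemiring B] [CommSemiring Γ] [Algebra B Γ]

noncomputable def dividedPowerExp (c : ℕ → Γ) (a : B) : PowerSeries Γ :=
  mk fun m => a ^ m • c m

variable {c : ℕ → Γ}

theorem dividedPowerExp_mul_dividedPowerExp
    (hc : ∀ i j, c i * c j = (Nat.choose (i + j) i : Γ) * c (i + j)) (a b : B) :
    dividedPowerExp c a * dividedPowerExp c b = dividedPowerExp c (a + b) := by
  ext m
  simp only [dividedPowerExp, coeff_mul, coeff_mk, (Commute.all a b).add_pow', sum_smul]
  refine sum_congr rfl fun ⟨i, j⟩ hij => ?_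
  rw [HasAntidiagonal.mem_antidiagonal] at hij
  dsimp only
  rw [smul_mul_smul_comm, hc, hij, ← nsmul_eq_mul, smul_comm, smul_assoc]

theorem C_mul_dividedPowerExp
    (hc : ∀ i j, c i * c j = (Nat.choose (i + j) i : Γ) * c (i + j)) (a : B) :
    C (c 0) * dividedPowerExp c a = dividedPowerExp c a := by
  ext m
  simp only [dividedPowerExp, coeff_C_mul, coeff_mk, mul_smul_comm, hc 0 m,
    Nat.choose_zero_right, Nat.cast_one, one_mul, zero_add]

end DividedPowers

section Passages

variable {B Γ : Type*} [CommSemiring B] [CommRing Γ] [Algebra B Γ]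

/-- The relation only makes `c 0` an idempotent acting as the identity on the columns, not `1`,
so it is `c 0` that is subtracted. -/
noncomputable def passageSeries (c : ℕ → Γ) (a : B) : PowerSeries Γ :=
  dividedPowerExp c a - C (c 0)

theorem coeff_passageSeries (c : ℕ → Γ) (a : B) (m : ℕ) :
    coeff m (passageSeries c a) = if m = 0 then 0 else a ^ m • c m := by
  cases m <;> simp [passageSeries, dividedPowerExp]

theorem constantCoeff_passageSeries (c : ℕ → Γ) (a : B) :
    constantCoeff (passageSeries c a) = 0 := by
  rw [← coeff_zero_eq_constantCoeff_apply, coeff_passageSeries, if_pos rfl]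

theorem passageSeries_add {c : ℕ → Γ}
    (hc : ∀ i j, c i * c j = (Nat.choose (i + j) i : Γ) * c (i + j)) (a b : B) :
    passageSeries c (a + b) =
      passageSeries c a + passageSeries c b + passageSeries c a * passageSeries c b := by
  have hidem : C (c 0) * C (c 0) = C (c 0) := by
    rw [← map_mul, hc 0 0, Nat.choose_zero_right, Nat.cast_one, one_mul]
  simp only [passageSeries, ← dividedPowerExp_mul_dividedPowerExp hc]
  linear_combination C_mul_dividedPowerExp hc a + C_mul_dividedPowerExp hc b - hidem

variable {X Y : Type*}

noncomputable def mazeSeries (col : X × Y → ℕ → Γ) (ℓ : List ((X × Y) × B)) :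
    PowerSeries Γ :=
  (ℓ.map fun p => passageSeries (col p.1) p.2).prod

theorem mazeSeries_cons (col : X × Y → ℕ → Γ) (p : (X × Y) × B)
    (ℓ : List ((X × Y) × B)) :
    mazeSeries col (p :: ℓ) = passageSeries (col p.1) p.2 * mazeSeries col ℓ :=
  List.prod_cons

theorem coeff_mazeSeries (col : X × Y → ℕ → Γ) (n : ℕ) (ℓ : List ((X × Y) × B)) :
    coeff n (mazeSeries col ℓ) =
      ∑ g ∈ (Nat.antidiagonalTuple ℓ.length n).filter (fun g => ∀ i, g i ≠ 0),
        (∏ i, (ℓ.get i).2 ^ g i) • ∏ i, col (ℓ.get i).1 (g i) := by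
  rw [mazeSeries, ← Fin.prod_univ_fun_getElem,
    coeff_prod_fin_of_constantCoeff_eq_zero _ fun _ => constantCoeff_passageSeries _ _]
  refine sum_congr rfl fun g hg => ?_
  rw [← prod_smul]
  refine prod_congr rfl fun i _ => ?_
  rw [coeff_passageSeries, if_neg ((mem_filter.1 hg).2 i)]
  rfl

end Passages

/-- the Ariadne assignment
`A_n(P) = Σ_{#A = P, |A| = n} Π_{p : x→y ∈ P} (label p)^{deg_A p} [x//y]^{[deg_A p]}`
(here a maze is a list of labelled passages and a multi-set `A` supported on `P` is a
positive multiplicity tuple summing to `n`, the columns `[x//y]^{[m]}` living in a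
commutative algebra satisfying the divided-power relation
`[c]^{[i]}·[c]^{[j]} = binom(i+j,i)·[c]^{[i+j]}`) respects the labyrinth relation:
`A_n(P ∪ {a+b}) = A_n(P ∪ {a}) + A_n(P ∪ {b}) + A_n(P ∪ {a, b})`. -/
theorem ariadne_respects_additivity {B Γ X Y : Type*} [CommRing B] [CommRing Γ]
    [Algebra B Γ]
    (col : X × Y → ℕ → Γ)
    (hcol : ∀ (c : X × Y) (i j : ℕ),
      col c i * col c j = (Nat.choose (i + j) i : Γ) * col c (i + j))
    (n : ℕ) (An : List ((X × Y) × B) → Γ)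
    (hAn : ∀ ℓ : List ((X × Y) × B), An ℓ =
      ∑ g ∈ (Finset.Nat.antidiagonalTuple ℓ.length n).filter (fun g => ∀ i, g i ≠ 0),
        (∏ i, (ℓ.get i).2 ^ g i) • ∏ i, col (ℓ.get i).1 (g i))
    (u : X) (v : Y) (a b : B) (ℓ : List ((X × Y) × B)) :
    An (((u, v), a + b) :: ℓ) =
      An (((u, v), a) :: ℓ) + An (((u, v), b) :: ℓ) +
        An (((u, v), a) :: ((u, v), b) :: ℓ) := by
  have hA : ∀ ℓ, An ℓ = coeff n (mazeSeries col ℓ) := fun ℓ =>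
    (hAn ℓ).trans (coeff_mazeSeries col n ℓ).symm
  simp only [hA, mazeSeries_cons, passageSeries_add (hcol (u, v))]
  rw [add_mul, add_mul, mul_assoc, map_add, map_add]
end

section
/- In the rational labyrinth category ℚ ⊗ Laby^n, the identity maze on a finite set X decomposes as I_X = Σ_{S : #S = I_X, |S| = n} (1/deg S) · S, where the sum is over multi-sets S of cardinality n supported on the identity passages of X, and the summands (1/deg S)·S are orthogonal idempotents: (1/deg S)S ∘ (1/deg T)T = 0 if S ≠ T and = (1/deg S)S if S = T. -/
/-
For a rational `q`, homogeneity gives `q ^ n • I_X = H (q ⊡ I_X)`, and the numerical relation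
expands the right-hand side as `Σ_c Π_x binom(q, c x) • M_c`, summed over the nowhere-zero count
functions `c : X → ℕ` of total weight at most `n`, where `M_c` has `c x` loops at `x`. Both sides
are polynomials in `q` with coefficients in a `ℚ`-vector space, so comparing the coefficients of
`q ^ n` gives `I_X = Σ_{|c| = n} (Π_x (c x)!)⁻¹ • M_c`, which is the decomposition over `S`.

For orthogonality, `S ∘ T` is a sum over relations `K` between the passages of `S` and `T` with
surjective projections. Those with more than `n` elements vanish; those with exactly `n` are the
graphs of bijections matching the colours of the loops, each contributing `S`. There are `deg S`
of them when `S = T` (the stabiliser of the colouring) and none otherwise.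
-/

open Finset

namespace LabySplit

variable {X B E : Type*}

/-- The binomial coefficient `binom(r, k)` in a `ℚ`-algebra `B`. -/
noncomputable def bc [CommRing B] [Algebra ℚ B] (r : B) (k : ℕ) : B :=
  ((k.factorial : ℚ)⁻¹) • ∏ i ∈ Finset.range k, (r - (i : B))

/-- A maze on the finite set `X` (an endomaze `X → X`), given as a list of labelled
passages; a passage `((x, y), b)` runs from `x` to `y` and carries the label `b`. -/
abbrev Maze (X B : Type*) := List ((X × X) × B)

variable [Fintype X] [DecidableEq X] [CommRing B] [Algebra ℚ B]

/-- The identity maze `I_X`: one passage `x → x` labelled `1` for each `x ∈ X`. -/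
noncomputable def idMaze (X B : Type*) [Fintype X] [CommRing B] : Maze X B :=
  (Finset.univ : Finset X).toList.map fun x => ((x, x), (1 : B))

/-- The maze associated to a multi-set `S` of cardinality `n` supported in the identity
passages of `X`: each `x ∈ S` contributes a passage `x → x` labelled `1`, with
multiplicity. -/
noncomputable def symMaze {n : ℕ} (S : Sym X n) : Maze X B :=
  (S : Multiset X).toList.map fun x => ((x, x), (1 : B))

/-- The degree `deg S = Π (multiplicities)!` of a multi-set supported in `I_X`. -/
def symDeg {n : ℕ} (S : Sym X n) : ℕ :=
  ∏ x : X, ((S : Multiset X).count x).factorial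

section Polynomial
open Polynomial

theorem eq_sum_coeff_smul_of_forall_pow_smul_eq {K M ι : Type*} [Field K] [Infinite K]
    [AddCommGroup M] [Module K M] (s : Finset ι) (p : ι → K[X]) (u : ι → M) (x : M) (n : ℕ)
    (h : ∀ q : K, q ^ n • x = ∑ i ∈ s, (p i).eval q • u i) :
    x = ∑ i ∈ s, (p i).coeff n • u i := by
  rw [← sub_eq_zero, ← Module.forall_dual_apply_eq_zero_iff K]
  intro φ
  -- after applying `φ`, both sides are scalar polynomials agreeing on the infinite field `K`
  have hpoly : C (φ x) * X ^ n = ∑ i ∈ s, p i * C (φ (u i)) :=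
    Polynomial.funext fun q => by simpa [eval_finsetSum, mul_comm (q ^ n)] using congrArg φ (h q)
  simpa [finsetSum_coeff, sub_eq_zero] using congrArg (coeff · n) hpoly

noncomputable def choosePoly (k : ℕ) : ℚ[X] := C (k.factorial : ℚ)⁻¹ * descPochhammer ℚ k

theorem bc_algebraMap (q : ℚ) (k : ℕ) :
    bc (algebraMap ℚ B q) k = algebraMap ℚ B ((choosePoly k).eval q) := by
  simp [bc, choosePoly, descPochhammer_eval_eq_prod_range, Algebra.smul_def, map_prod]

theorem coeff_prod_choosePoly {ι : Type*} (s : Finset ι) (c : ι → ℕ) {n : ℕ}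
    (hn : ∑ i ∈ s, c i ≤ n) :
    (∏ i ∈ s, choosePoly (c i)).coeff n =
      if ∑ i ∈ s, c i = n then ∏ i ∈ s, ((c i).factorial : ℚ)⁻¹ else 0 := by
  have hmonic : (∏ i ∈ s, descPochhammer ℚ (c i)).Monic :=
    monic_prod_of_monic _ _ fun i _ => monic_descPochhammer ℚ (c i)
  have hdeg : (∏ i ∈ s, descPochhammer ℚ (c i)).natDegree = ∑ i ∈ s, c i := by
    rw [natDegree_prod_of_monic _ _ fun i _ => monic_descPochhammer ℚ (c i)]
    simp [descPochhammer_natDegree]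
  simp_rw [choosePoly, Finset.prod_mul_distrib, ← map_prod, coeff_C_mul]
  split_ifs with h
  · rw [← h, ← hdeg, hmonic.coeff_natDegree, mul_one]
  · rw [coeff_eq_zero_of_natDegree_lt (by omega), mul_zero]

end Polynomial

def PermInvariant {α E : Type*} (H : List α → E) : Prop :=
  ∀ {l l' : List α}, l.Perm l' → H l = H l'

theorem PermInvariant.eq_of_coe_eq {α E : Type*} {H : List α → E} (hperm : PermInvariant H)
    {l l' : List α} (h : (l : Multiset α) = l') : H l = H l' :=
  hperm (Multiset.coe_eq_coe.1 h)

def NumericalRelation [AddCommMonoid E] [SMul B E] (n : ℕ) (H : Maze X B → E) : Prop :=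
  ∀ l : Maze X B, H l =
    ∑ g ∈ (((Finset.range (n + 1)).biUnion fun m =>
            Finset.Nat.antidiagonalTuple l.length m).filter fun g => ∀ i, g i ≠ 0),
      (∏ i, bc (l.get i).2 (g i)) •
        H ((List.finRange l.length).flatMap fun i =>
            List.replicate (g i) ((l.get i).1, (1 : B)))

def Homogeneous [SMul B E] (n : ℕ) (H : Maze X B → E) : Prop :=
  ∀ (a : B) (l : Maze X B), H (l.map fun p => (p.1, a * p.2)) = a ^ n • H l

def VanishesAbove [Zero E] (n : ℕ) (H : Maze X B → E) : Prop :=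
  ∀ l : Maze X B, n < l.length → H l = 0

def CompositionRelation [Mul E] [AddCommMonoid E] (H : Maze X B → E) : Prop :=
  ∀ P Q : Maze X B, H P * H Q =
    ∑ K ∈ (Finset.univ : Finset (Finset (Fin P.length × Fin Q.length))).filter
        (fun K => (∀ ij ∈ K, (Q.get ij.2).1.2 = (P.get ij.1).1.1) ∧
          (∀ i, ∃ j, (i, j) ∈ K) ∧ (∀ j, ∃ i, (i, j) ∈ K)),
      H (K.toList.map fun ij =>
        (((Q.get ij.2).1.1, (P.get ij.1).1.2), (P.get ij.1).2 * (Q.get ij.2).2))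

noncomputable def loopMaze (m : Multiset X) : Maze X B := m.toList.map fun x => ((x, x), 1)

def countSet (X : Type*) [Fintype X] [DecidableEq X] (n : ℕ) : Finset (X → ℕ) :=
  ((range (n + 1)).biUnion fun m => piAntidiag univ m).filter fun c => ∀ x, c x ≠ 0

theorem mem_countSet {n : ℕ} {c : X → ℕ} : c ∈ countSet X n ↔ ∑ x, c x ≤ n ∧ ∀ x, c x ≠ 0 := by
  simp [countSet]

theorem coe_flatMap_finRange {α : Type*} {L : ℕ} (f : Fin L → List α) :
    (((List.finRange L).flatMap f : List α) : Multiset α) = ∑ i, (f i : Multiset α) := by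
  rw [← Multiset.coe_bind, Multiset.bind, Finset.sum_eq_multiset_sum, Fin.univ_val_map,
    List.ofFn_eq_map, ← Multiset.map_coe]
  rfl

theorem numericalRelation_loops [AddCommMonoid E] [SMul B E] {n : ℕ} {H : Maze X B → E}
    (hperm : PermInvariant H) (hIV : NumericalRelation n H) (a : B) (l : Maze X B)
    (e : Fin l.length ≃ X) (hl : ∀ i, l.get i = ((e i, e i), a)) :
    H l = ∑ c ∈ countSet X n,
      (∏ x, bc a (c x)) • H (loopMaze (∑ x, Multiset.replicate (c x) x)) := by
  rw [hIV l]
  refine Finset.sum_equiv (e.arrowCongr (Equiv.refl ℕ)) (fun g => ?_) (fun g _ => ?_)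
  · simp [mem_countSet, Finset.Nat.mem_antidiagonalTuple, Equiv.sum_comp e.symm g,
      e.symm.forall_congr_left]
  · simp only [hl, Equiv.arrowCongr_apply, Equiv.coe_refl, Function.comp_apply, id]
    rw [e.symm.prod_comp fun i => bc a (g i)]
    congr 1
    refine hperm.eq_of_coe_eq ?_
    rw [loopMaze, ← Multiset.map_coe, Multiset.coe_toList, coe_flatMap_finRange,
      ← Multiset.coe_mapAddMonoidHom, map_sum, ← e.sum_comp]
    simp [Multiset.coe_replicate]

theorem pow_smul_idMaze [AddCommGroup E] [Module B E] [Module ℚ E] [IsScalarTower ℚ B E] {n : ℕ}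
    {H : Maze X B → E} (hperm : PermInvariant H) (hIV : NumericalRelation n H)
    (hV : Homogeneous n H) (q : ℚ) :
    q ^ n • H (idMaze X B) = ∑ c ∈ countSet X n,
      (∏ x, choosePoly (c x)).eval q • H (loopMaze (∑ x, Multiset.replicate (c x) x)) := by
  set a := algebraMap ℚ B q
  let l : Maze X B := (univ : Finset X).toList.map fun x => ((x, x), a)
  let e : Fin l.length ≃ X := (finCongr (List.length_map _)).trans
    (List.Nodup.getEquivOfForallMemList _ (nodup_toList _) (by simp))
  have hl : ∀ i, l.get i = ((e i, e i), a) := by simp [l, e]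
  calc q ^ n • H (idMaze X B) = a ^ n • H (idMaze X B) := by rw [← map_pow, algebraMap_smul]
    _ = H l := by rw [← hV]; simp [idMaze, l, List.map_map, Function.comp_def]
    _ = _ := numericalRelation_loops hperm hIV a l e hl
    _ = _ := by simp [a, bc_algebraMap, ← map_prod, Polynomial.eval_prod, algebraMap_smul]

theorem count_sum_replicate (c : X → ℕ) (y : X) :
    (∑ x, Multiset.replicate (c x) x).count y = c y := by
  simp [Multiset.count_sum', Multiset.count_replicate]

theorem sum_replicate_count (m : Multiset X) : ∑ x, Multiset.replicate (m.count x) x = m :=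
  Multiset.ext.2 fun y => count_sum_replicate _ y

theorem idMaze_eq_sum_symMaze [AddCommGroup E] [Module B E] [Module ℚ E] [IsScalarTower ℚ B E]
    {n : ℕ} {H : Maze X B → E} (hperm : PermInvariant H) (hIV : NumericalRelation n H)
    (hV : Homogeneous n H) :
    H (idMaze X B) = ∑ S ∈ univ.filter (fun S : Sym X n => (S : Multiset X).toFinset = univ),
      algebraMap ℚ B ((symDeg S : ℚ)⁻¹) • H (symMaze S) := by
  rw [eq_sum_coeff_smul_of_forall_pow_smul_eq _ _ _ _ n (pow_smul_idMaze hperm hIV hV)]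
  rw [Finset.sum_congr rfl fun c hc => by rw [coeff_prod_choosePoly _ _ (mem_countSet.1 hc).1]]
  simp_rw [ite_smul, zero_smul]
  rw [← Finset.sum_filter]
  symm
  refine Finset.sum_bij' (fun S _ x => (S : Multiset X).count x)
    (fun c hc => Sym.mk (∑ x, Multiset.replicate (c x) x) ?_) (fun S hS => ?_) (fun c hc => ?_)
    (fun S _ => Sym.coe_injective (sum_replicate_count _))
    (fun c _ => funext fun x => count_sum_replicate _ x) (fun S _ => ?_)
  · simpa [Multiset.card_sum] using (Finset.mem_filter.1 hc).2
  · have hsum : ∑ x, (S : Multiset X).count x = n := by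
      rw [← (Finset.mem_filter.1 hS).2, Multiset.toFinset_sum_count_eq, Sym.card_coe]
    simp only [Finset.mem_filter, mem_countSet, Finset.mem_univ, true_and] at hS ⊢
    refine ⟨⟨hsum.le, fun x => ?_⟩, hsum⟩
    simp [← Multiset.mem_toFinset, hS]
  · have hc0 := (mem_countSet.1 (Finset.mem_filter.1 hc).1).2
    refine Finset.mem_filter.2 ⟨mem_univ _, eq_univ_of_forall fun x => ?_⟩
    rw [Multiset.mem_toFinset, Sym.coe_mk, ← Multiset.count_pos, count_sum_replicate]
    exact Nat.pos_of_ne_zero (hc0 x)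
  · rw [sum_replicate_count, algebraMap_smul]
    congr 1
    simp [symDeg]

section Graph
variable {α β : Type*} [Fintype α]

def graphFinset (e : α → β) : Finset (α × β) :=
  univ.map ⟨fun i => (i, e i), fun _ _ h => congrArg Prod.fst h⟩

theorem val_graphFinset (e : α → β) : (graphFinset e).val = univ.val.map fun i => (i, e i) := rfl

@[simp]
theorem mem_graphFinset {e : α → β} {ij : α × β} : ij ∈ graphFinset e ↔ e ij.1 = ij.2 := by
  obtain ⟨i, j⟩ := ij
  rw [graphFinset, Finset.mem_map]
  constructor
  · rintro ⟨a, -, h⟩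
    obtain ⟨rfl, rfl⟩ := Prod.mk.inj h
    rfl
  · intro h
    exact ⟨i, mem_univ i, congrArg (Prod.mk i) h⟩

theorem card_graphFinset (e : α → β) : (graphFinset e).card = Fintype.card α := by
  simp [graphFinset]

theorem graphFinset_injective : Function.Injective (graphFinset : (α → β) → Finset (α × β)) := by
  intro e e' h
  funext i
  have hi : (i, e i) ∈ graphFinset e' := h ▸ mem_graphFinset.2 rfl
  exact (mem_graphFinset.1 hi).symm

theorem card_le_card_of_forall_exists_mem {K : Finset (α × β)} (hK : ∀ i, ∃ j, (i, j) ∈ K) :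
    Fintype.card α ≤ K.card :=
  Finset.card_le_card_of_surjOn Prod.fst fun i _ =>
    let ⟨j, hj⟩ := hK i; ⟨(i, j), hj, rfl⟩

theorem exists_eq_graphFinset_of_card_le {K : Finset (α × β)} (hK : ∀ i, ∃ j, (i, j) ∈ K)
    (hcard : K.card ≤ Fintype.card α) : ∃ e : α → β, K = graphFinset e := by
  choose e he using hK
  refine ⟨e, (Finset.eq_of_subset_of_card_le (fun ij hij => ?_) (by rwa [card_graphFinset])).symm⟩
  obtain ⟨i, j⟩ := ij
  obtain rfl : e i = j := mem_graphFinset.1 hij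
  exact he i

theorem sum_eq_sum_graphFinset_equiv [Fintype β] [DecidableEq α] [DecidableEq β]
    {M : Type*} [AddCommMonoid M] (R : α → β → Prop) [Fintype {e : α ≃ β // ∀ i, R i (e i)}]
    (hcard : Fintype.card α = Fintype.card β) (A : Finset (Finset (α × β)))
    (hA : ∀ K, K ∈ A ↔
      (∀ ij ∈ K, R ij.1 ij.2) ∧ (∀ i, ∃ j, (i, j) ∈ K) ∧ (∀ j, ∃ i, (i, j) ∈ K))
    (F : Finset (α × β) → M) (hF : ∀ K : Finset (α × β), Fintype.card α < K.card → F K = 0) :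
    ∑ K ∈ A, F K = ∑ e : {e : α ≃ β // ∀ i, R i (e i)}, F (graphFinset e.1) := by
  have hinj : Function.Injective fun e : {e : α ≃ β // ∀ i, R i (e i)} => graphFinset e.1 :=
    fun _ _ h => Subtype.ext (DFunLike.coe_injective (graphFinset_injective h))
  refine (Finset.sum_subset (fun K hK => ?_) (fun K hK hKe => hF K ?_)).symm.trans
    (Finset.sum_image hinj.injOn)
  · obtain ⟨e, -, rfl⟩ := Finset.mem_image.1 hK
    refine (hA _).2 ⟨fun ij hij => ?_, fun i => ⟨e.1 i, by simp⟩, fun j => ⟨e.1.symm j, by simp⟩⟩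
    rw [← mem_graphFinset.1 hij]
    exact e.2 ij.1
  · obtain ⟨hR, hfst, hsnd⟩ := (hA K).1 hK
    refine (card_le_card_of_forall_exists_mem hfst).lt_of_ne fun heq => hKe ?_
    obtain ⟨e, rfl⟩ := exists_eq_graphFinset_of_card_le hfst heq.ge
    have hsurj : Function.Surjective e := fun j =>
      let ⟨i, hi⟩ := hsnd j; ⟨i, mem_graphFinset.1 hi⟩
    have hbij : Function.Bijective e :=
      (Fintype.bijective_iff_surjective_and_card e).2 ⟨hsurj, hcard⟩
    exact Finset.mem_image.2 ⟨⟨Equiv.ofBijective e hbij, fun i => hR (i, e i) (by simp)⟩,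
      Finset.mem_univ _, rfl⟩

end Graph

theorem map_get_univ_val {α : Type*} (l : List α) : (univ.val.map l.get : Multiset α) = l := by
  rw [Fin.univ_val_map, List.ofFn_get]

theorem mul_eq_card_smul_of_loops {X B E : Type*} [DecidableEq X] [CommRing B]
    [NonUnitalNonAssocSemiring E] {n : ℕ} {H : Maze X B → E} (hperm : PermInvariant H)
    (hIII : VanishesAbove n H) (hcomp : CompositionRelation H) {P Q : Maze X B}
    (hQ : ∀ p ∈ Q, p = ((p.1.1, p.1.1), 1)) (hPn : P.length = n) (hQn : Q.length = n) :
    H P * H Q = Fintype.card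
      {e : Fin P.length ≃ Fin Q.length // ∀ i, (Q.get (e i)).1.2 = (P.get i).1.1} • H P := by
  rw [hcomp, sum_eq_sum_graphFinset_equiv (fun i j => (Q.get j).1.2 = (P.get i).1.1)
    (by simp [hPn, hQn]) _ (fun K => by simp) _ fun K hK => hIII _ (by simpa [hPn] using hK)]
  rw [Finset.sum_congr rfl fun e _ => ?_, Finset.sum_const, card_univ]
  refine hperm.eq_of_coe_eq ?_
  rw [← Multiset.map_coe, Finset.coe_toList, val_graphFinset, Multiset.map_map,
    ← map_get_univ_val P]
  refine Multiset.map_congr rfl fun i _ => ?_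
  have hQi := hQ _ (List.get_mem Q (e.1 i))
  have hmatch : (Q.get (e.1 i)).1.1 = (P.get i).1.1 := by rw [← e.2 i, hQi]
  have hlabel : (Q.get (e.1 i)).2 = 1 := congrArg Prod.snd hQi
  simp only [Function.comp_apply, hmatch, hlabel, mul_one]

theorem card_subtype_eq_count_map {α Y : Type*} [Fintype α] [DecidableEq Y] (f : α → Y) (y : Y) :
    Fintype.card {i // f i = y} = (univ.val.map f).count y := by
  rw [Fintype.card_subtype, Multiset.count_map, Finset.card, Finset.filter_val]
  simp_rw [eq_comm]

theorem eq_loop_of_mem_symMaze {X B : Type*} [CommRing B] {n : ℕ} (S : Sym X n) :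
    ∀ p ∈ (symMaze S : Maze X B), p = ((p.1.1, p.1.1), 1) := by
  simp [symMaze]

theorem length_symMaze {X B : Type*} [CommRing B] {n : ℕ} (S : Sym X n) :
    (symMaze S : Maze X B).length = n := by
  simp [symMaze]

theorem map_univ_val_symMaze_get {X B : Type*} [CommRing B] {n : ℕ} (S : Sym X n) :
    univ.val.map (fun i => ((symMaze S : Maze X B).get i).1.1) = (S : Multiset X) := by
  rw [show (fun i => ((symMaze S : Maze X B).get i).1.1) = (fun p => p.1.1) ∘ (symMaze S).get
    from rfl, ← Multiset.map_map, map_get_univ_val, Multiset.map_coe]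
  simp [symMaze, Function.comp_def]

theorem card_equiv_symMaze_self {X B : Type*} [Fintype X] [DecidableEq X] [CommRing B]
    {n : ℕ} (S : Sym X n) :
    Fintype.card {e : Fin (symMaze S : Maze X B).length ≃ Fin (symMaze S : Maze X B).length //
      ∀ i, ((symMaze S : Maze X B).get (e i)).1.2 = ((symMaze S : Maze X B).get i).1.1} =
      symDeg S := by
  set f := fun i => ((symMaze S : Maze X B).get i).1.1
  have hloop : ∀ i, ((symMaze S : Maze X B).get i).1.2 = f i := fun i => by
    rw [eq_loop_of_mem_symMaze S _ (List.get_mem _ i)]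
  calc _ = Fintype.card {σ : Equiv.Perm _ // f ∘ σ = f} :=
        Fintype.card_congr (Equiv.subtypeEquivRight fun σ => by
          simp only [funext_iff, Function.comp_apply, hloop]
          rfl)
    _ = ∏ x, (Fintype.card {i // f i = x}).factorial := DomMulAct.stabilizer_card f
    _ = symDeg S := by simp_rw [card_subtype_eq_count_map, f, map_univ_val_symMaze_get, symDeg]

theorem card_equiv_symMaze_of_ne {X B : Type*} [DecidableEq X] [CommRing B] {n : ℕ} {S T : Sym X n}
    (hST : S ≠ T) :
    Fintype.card {e : Fin (symMaze S : Maze X B).length ≃ Fin (symMaze T : Maze X B).length //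
      ∀ i, ((symMaze T : Maze X B).get (e i)).1.2 = ((symMaze S : Maze X B).get i).1.1} = 0 := by
  refine Fintype.card_eq_zero_iff.2 ⟨fun ⟨e, he⟩ => hST (Sym.coe_injective ?_)⟩
  have hloop : ∀ j, ((symMaze T : Maze X B).get j).1.2 = ((symMaze T : Maze X B).get j).1.1 :=
    fun j => by rw [eq_loop_of_mem_symMaze T _ (List.get_mem _ j)]
  rw [← map_univ_val_symMaze_get (B := B) S, ← map_univ_val_symMaze_get (B := B) T,
    ← Multiset.map_univ_val_equiv e, Multiset.map_map]
  exact Multiset.map_congr rfl fun i _ => by rw [Function.comp_apply, ← he i, hloop]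

theorem symMaze_mul_symMaze {X B E : Type*} [Fintype X] [DecidableEq X] [CommRing B]
    [NonUnitalNonAssocSemiring E] {n : ℕ} {H : Maze X B → E}
    (hperm : PermInvariant H) (hIII : VanishesAbove n H) (hcomp : CompositionRelation H)
    (S T : Sym X n) :
    H (symMaze S) * H (symMaze T) = (if S = T then symDeg S else 0) • H (symMaze S) := by
  rw [mul_eq_card_smul_of_loops hperm hIII hcomp (eq_loop_of_mem_symMaze T) (length_symMaze S)
    (length_symMaze T)]
  split_ifs with hST
  · subst hST
    rw [card_equiv_symMaze_self]
  · rw [card_equiv_symMaze_of_ne hST]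

theorem idMaze_decomposition_general [Ring E] [Algebra B E] (n : ℕ)
    (H : Maze X B → E)
    (hperm : ∀ {l l' : Maze X B}, l.Perm l' → H l = H l')
    (hIII : ∀ l : Maze X B, n < l.length → H l = 0)
    (hIV : ∀ l : Maze X B, H l =
      ∑ g ∈ (((Finset.range (n + 1)).biUnion fun m =>
              Finset.Nat.antidiagonalTuple l.length m).filter fun g => ∀ i, g i ≠ 0),
        (∏ i, bc (l.get i).2 (g i)) •
          H ((List.finRange l.length).flatMap fun i =>
              List.replicate (g i) ((l.get i).1, (1 : B))))
    (hV : ∀ (a : B) (l : Maze X B),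
      H (l.map fun p => (p.1, a * p.2)) = a ^ n • H l)
    (hcomp : ∀ P Q : Maze X B, H P * H Q =
      ∑ K ∈ (Finset.univ : Finset (Finset (Fin P.length × Fin Q.length))).filter
          (fun K => (∀ ij ∈ K, (Q.get ij.2).1.2 = (P.get ij.1).1.1) ∧
            (∀ i, ∃ j, (i, j) ∈ K) ∧ (∀ j, ∃ i, (i, j) ∈ K)),
        H (K.toList.map fun ij =>
          (((Q.get ij.2).1.1, (P.get ij.1).1.2), (P.get ij.1).2 * (Q.get ij.2).2))) :
    H (idMaze X B) =
      (∑ S ∈ (Finset.univ : Finset (Sym X n)).filter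
          (fun S : Sym X n => (S : Multiset X).toFinset = Finset.univ),
        algebraMap ℚ B ((symDeg S : ℚ)⁻¹) • H (symMaze S)) ∧
    (∀ S ∈ (Finset.univ : Finset (Sym X n)).filter
          (fun S : Sym X n => (S : Multiset X).toFinset = Finset.univ),
      ∀ T ∈ (Finset.univ : Finset (Sym X n)).filter
          (fun S : Sym X n => (S : Multiset X).toFinset = Finset.univ),
      (algebraMap ℚ B ((symDeg S : ℚ)⁻¹) • H (symMaze S)) *
          (algebraMap ℚ B ((symDeg T : ℚ)⁻¹) • H (symMaze T)) =
        if S = T then algebraMap ℚ B ((symDeg S : ℚ)⁻¹) • H (symMaze S) else 0) := by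
  let : Module ℚ E := Module.compHom E (algebraMap ℚ B)
  have : IsScalarTower ℚ B E := IsScalarTower.of_algebraMap_smul fun _ _ => rfl
  refine ⟨idMaze_eq_sum_symMaze hperm hIV hV, fun S _ T _ => ?_⟩
  rw [smul_mul_smul_comm, symMaze_mul_symMaze hperm hIII hcomp]
  split_ifs with hST
  · subst hST
    have hdeg : (symDeg S : ℚ) ≠ 0 :=
      Nat.cast_ne_zero.2 (Finset.prod_ne_zero_iff.2 fun _ _ => Nat.factorial_ne_zero _)
    rw [← Nat.cast_smul_eq_nsmul B, smul_smul, ← map_natCast (algebraMap ℚ B), ← map_mul,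
      ← map_mul, inv_mul_cancel_right₀ hdeg]
  · rw [zero_smul, smul_zero]

/-- in `ℚ ⊗ Laby^n`, i.e. in any model `H` of its defining relations
(passages labelled `0` kill a maze; additivity of labels; mazes with more than `n`
passages vanish; the numerical relation IV; the homogeneity relation `a ⊡ P = a^n P`;
composition of mazes given by the sum over sub-multi-sets of the cartesian product
with surjective projections; invariance under reordering of passages), the identity
maze decomposes as `I_X = Σ_{#S = I_X, |S| = n} (1/deg S)·S`, and the summands
`(1/deg S)·S` are orthogonal idempotents. -/
theorem idMaze_decomposition [Ring E] [Algebra B E] (n : ℕ)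
    (H : Maze X B → E)
    (hperm : ∀ {l l' : Maze X B}, l.Perm l' → H l = H l')
    (h0 : ∀ (u v : X) (l : Maze X B), H (((u, v), (0 : B)) :: l) = 0)
    (hadd : ∀ (u v : X) (x y : B) (l : Maze X B),
      H (((u, v), x + y) :: l) =
        H (((u, v), x) :: l) + H (((u, v), y) :: l) +
          H (((u, v), x) :: ((u, v), y) :: l))
    (hIII : ∀ l : Maze X B, n < l.length → H l = 0)
    (hIV : ∀ l : Maze X B, H l =
      ∑ g ∈ (((Finset.range (n + 1)).biUnion fun m =>
              Finset.Nat.antidiagonalTuple l.length m).filter fun g => ∀ i, g i ≠ 0),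
        (∏ i, bc (l.get i).2 (g i)) •
          H ((List.finRange l.length).flatMap fun i =>
              List.replicate (g i) ((l.get i).1, (1 : B))))
    (hV : ∀ (a : B) (l : Maze X B),
      H (l.map fun p => (p.1, a * p.2)) = a ^ n • H l)
    (hcomp : ∀ P Q : Maze X B, H P * H Q =
      ∑ K ∈ (Finset.univ : Finset (Finset (Fin P.length × Fin Q.length))).filter
          (fun K => (∀ ij ∈ K, (Q.get ij.2).1.2 = (P.get ij.1).1.1) ∧
            (∀ i, ∃ j, (i, j) ∈ K) ∧ (∀ j, ∃ i, (i, j) ∈ K)),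
        H (K.toList.map fun ij =>
          (((Q.get ij.2).1.1, (P.get ij.1).1.2), (P.get ij.1).2 * (Q.get ij.2).2))) :
    H (idMaze X B) =
      (∑ S ∈ (Finset.univ : Finset (Sym X n)).filter
          (fun S : Sym X n => (S : Multiset X).toFinset = Finset.univ),
        algebraMap ℚ B ((symDeg S : ℚ)⁻¹) • H (symMaze S)) ∧
    (∀ S ∈ (Finset.univ : Finset (Sym X n)).filter
          (fun S : Sym X n => (S : Multiset X).toFinset = Finset.univ),
      ∀ T ∈ (Finset.univ : Finset (Sym X n)).filter
          (fun S : Sym X n => (S : Multiset X).toFinset = Finset.univ),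
      (algebraMap ℚ B ((symDeg S : ℚ)⁻¹) • H (symMaze S)) *
          (algebraMap ℚ B ((symDeg T : ℚ)⁻¹) • H (symMaze T)) =
        if S = T then algebraMap ℚ B ((symDeg S : ℚ)⁻¹) • H (symMaze S) else 0) :=
  idMaze_decomposition_general n H hperm hIII hIV hV hcomp

end LabySplit
end
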